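/- arXiv:1804.06139 — 10 statements merged into one kernel-verified Lean document; each statement's English description precedes it below -/
import Mathlib

section
/- Let 0 = β_0 < β_1 < β_2 < … be real numbers and X_n ≥ 0 (n = 0,1,2,…). Define the age process A_t = X_{n−1} + (t − β_{n−1}) for t ∈ [β_{n−1}, β_n), n = 1,2,…, and the peak ages A_peak,n = X_{n−1} + (β_n − β_{n−1}) for n = 1,2,…. Assume: (i) lim_{n→∞} β_n/n = 1/λ for some λ ∈ (0,∞); (ii) for every x ≥ 0 the limits A_peak♯(x) = lim_{N→∞} (1/N) Σ_{n=1}^N 1{A_peak,n ≤ x} and X♯(x) = lim_{N→∞} (1/N) Σ_{n=1}^N 1{X_n ≤ x} exist. Then for every x ≥ 0 the limit A♯(x) = lim_{T→∞} (1/T) ∫_0^T 1{A_t ≤ x} dt exists and equals λ ∫_0^x (X♯(y) − A_peak♯(y)) dy. -/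
/-!
On the `n`-th inter-update interval the age grows with slope one from `X n` to the peak age
`P n = X n + (β (n + 1) - β n)`, so the time it spends at or below `x` is
`(x - X n)⁺ - (x - P n)⁺ = ∫ y in 0..x, (1{X n ≤ y} - 1{P n ≤ y})`. Summing over the first `N`
intervals, `(1 / N) ∫ t in 0..β N, 1{A t ≤ x}` is the integral over `[0, x]` of the difference of
the empirical distribution functions of the post-update and peak ages, which converges by
dominated convergence. Since `β N / N → 1 / λ` and the occupation time is monotone in `T`, the
average over `[0, T]` is squeezed between its values at the update times around `T`.
-/

open Filter Topology MeasureTheory Set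

lemma intervalIntegral_ite_le {a b : ℝ} (hab : a ≤ b) (r : ℝ) :
    ∫ t in a..b, (if t ≤ r then (1 : ℝ) else 0) = max (min b r - a) 0 := by
  have h : (fun t : ℝ => if t ≤ r then (1 : ℝ) else 0) = (Iic r).indicator 1 := by
    ext t; simp [indicator_apply]
  rw [h, intervalIntegral.integral_of_le hab, setIntegral_indicator measurableSet_Iic,
    Ioc_inter_Iic, Pi.one_def, setIntegral_const, Real.volume_real_Ioc, smul_eq_mul, mul_one]

lemma intervalIntegral_ite_ge {c d : ℝ} (hcd : c ≤ d) (a : ℝ) :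
    ∫ y in c..d, (if a ≤ y then (1 : ℝ) else 0) = max (d - max c a) 0 := by
  have h : (fun y : ℝ => if a ≤ y then (1 : ℝ) else 0) = (Ici a).indicator 1 := by
    ext y; simp [indicator_apply]
  rw [h, intervalIntegral.integral_congr_ae_restrict
      (ae_restrict_of_ae (indicator_ae_eq_of_ae_eq_set Ioi_ae_eq_Ici.symm)),
    intervalIntegral.integral_of_le hcd, setIntegral_indicator measurableSet_Ioi,
    Ioc_inter_Ioi, Pi.one_def, setIntegral_const, Real.volume_real_Ioc, smul_eq_mul, mul_one]

lemma monotoneOn_integral_of_nonneg {f : ℝ → ℝ} {a : ℝ} (hf : ∀ t, 0 ≤ f t)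
    (hfi : ∀ b, a ≤ b → IntervalIntegrable f volume a b) :
    MonotoneOn (fun b => ∫ t in a..b, f t) (Ici a) := fun _ hs _ ht hst =>
  intervalIntegral.integral_mono_interval le_rfl hs hst (ae_of_all _ hf) (hfi _ ht)

lemma monotone_ite_le (a : ℝ) : Monotone fun y : ℝ => if a ≤ y then (1 : ℝ) else 0 :=
  fun _ _ hyz => by
    dsimp only; split_ifs with h₁ h₂ <;> first | exact absurd (h₁.trans hyz) h₂ | norm_num

lemma antitone_ite_le (r : ℝ) : Antitone fun t : ℝ => if t ≤ r then (1 : ℝ) else 0 :=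
  fun _ _ hst => by
    dsimp only; split_ifs with h₁ h₂ <;> first | exact absurd (hst.trans h₁) h₂ | norm_num

noncomputable def empiricalCDF (u : ℕ → ℝ) (N : ℕ) (y : ℝ) : ℝ :=
  (∑ n ∈ Finset.range N, if u n ≤ y then (1 : ℝ) else 0) / N

section empiricalCDF

variable {u v : ℕ → ℝ} {N : ℕ}

lemma empiricalCDF_nonneg (y : ℝ) : 0 ≤ empiricalCDF u N y := by
  unfold empiricalCDF; positivity

lemma empiricalCDF_le_one (y : ℝ) : empiricalCDF u N y ≤ 1 := by
  rw [empiricalCDF, Finset.sum_boole]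
  exact div_le_one_of_le₀ (mod_cast (Finset.card_filter_le _ _).trans (Finset.card_range N).le)
    N.cast_nonneg

lemma monotone_empiricalCDF : Monotone (empiricalCDF u N) := fun _ _ hyz =>
  div_le_div_of_nonneg_right (Finset.sum_le_sum fun n _ => monotone_ite_le (u n) hyz) N.cast_nonneg

lemma integral_empiricalCDF {c d : ℝ} (hu : ∀ n, c ≤ u n) (hcd : c ≤ d) :
    ∫ y in c..d, empiricalCDF u N y = (∑ n ∈ Finset.range N, max (d - u n) 0) / N := by
  simp only [empiricalCDF]
  rw [intervalIntegral.integral_div, intervalIntegral.integral_finsetSum fun n _ =>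
    (monotone_ite_le (u n)).intervalIntegrable]
  simp only [intervalIntegral_ite_ge hcd, max_eq_right (hu _)]

lemma tendsto_integral_empiricalCDF_sub {Fu Fv : ℝ → ℝ} {a b : ℝ}
    (hu : ∀ y ∈ uIoc a b, Tendsto (fun N => empiricalCDF u N y) atTop (𝓝 (Fu y)))
    (hv : ∀ y ∈ uIoc a b, Tendsto (fun N => empiricalCDF v N y) atTop (𝓝 (Fv y))) :
    Tendsto (fun N => ∫ y in a..b, (empiricalCDF u N y - empiricalCDF v N y)) atTop
      (𝓝 (∫ y in a..b, (Fu y - Fv y))) :=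
  intervalIntegral.tendsto_integral_filter_of_dominated_convergence (fun _ => 1)
    (Eventually.of_forall fun _ =>
      (monotone_empiricalCDF.intervalIntegrable.sub
        monotone_empiricalCDF.intervalIntegrable).def'.aestronglyMeasurable)
    (Eventually.of_forall fun _ => ae_of_all _ fun y _ =>
      abs_sub_le_of_nonneg_of_le (empiricalCDF_nonneg y) (empiricalCDF_le_one y)
        (empiricalCDF_nonneg y) (empiricalCDF_le_one y))
    intervalIntegrable_const (ae_of_all _ fun y hy => (hu y hy).sub (hv y hy))

end empiricalCDF

lemma tendsto_comp_succ_div_natCast_iff {u : ℕ → ℝ} {L : ℝ} :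
    Tendsto (fun n : ℕ => u (n + 1) / n) atTop (𝓝 L) ↔
      Tendsto (fun n : ℕ => u n / n) atTop (𝓝 L) := by
  have hn := tendsto_natCast_div_add_atTop (𝕜 := ℝ) 1
  rw [← tendsto_add_atTop_iff_nat (f := fun n : ℕ => u n / n) 1]
  push_cast
  constructor
  · intro h
    refine (mul_one L ▸ h.mul hn).congr' ?_
    filter_upwards [eventually_ne_atTop 0] with n hn0
    field_simp
  · intro h
    refine (div_one L ▸ h.div hn one_ne_zero).congr fun n => ?_
    exact div_div_div_cancel_right₀ (by positivity) _ _

lemma tendsto_sum_range_div_of_succ {u : ℕ → ℝ} {L : ℝ}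
    (h : Tendsto (fun N : ℕ => (∑ n ∈ Finset.range N, u (n + 1)) / N) atTop (𝓝 L)) :
    Tendsto (fun N : ℕ => (∑ n ∈ Finset.range N, u n) / N) atTop (𝓝 L) := by
  rw [← tendsto_comp_succ_div_natCast_iff]
  refine (add_zero L ▸ h.add (tendsto_const_div_atTop_nhds_zero_nat (u 0))).congr fun N => ?_
  rw [Finset.sum_range_succ', add_div]

lemma tendsto_atTop_of_tendsto_div_natCast {u : ℕ → ℝ} {c : ℝ} (hc : 0 < c)
    (h : Tendsto (fun n : ℕ => u n / n) atTop (𝓝 c)) : Tendsto u atTop atTop := by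
  refine (h.pos_mul_atTop hc tendsto_natCast_atTop_atTop).congr' ?_
  filter_upwards [eventually_ne_atTop 0] with n hn
  exact div_mul_cancel₀ _ (Nat.cast_ne_zero.2 hn)

lemma Monotone.exists_mem_Ico_of_tendsto_atTop {β : ℕ → ℝ} (hβ : Monotone β)
    (hβtop : Tendsto β atTop atTop) {N : ℕ} {T : ℝ} (hT : β N ≤ T) :
    ∃ n ≥ N, T ∈ Ico (β n) (β (n + 1)) := by
  have hex : ∃ m, T < β m := (hβtop.eventually_gt_atTop T).exists
  have hN : N < Nat.find hex := by
    by_contra! h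
    exact (Nat.find_spec hex).not_ge ((hβ h).trans hT)
  refine ⟨Nat.find hex - 1, by omega, not_lt.1 (Nat.find_min hex (by omega)), ?_⟩
  rw [Nat.sub_add_cancel (by omega)]
  exact Nat.find_spec hex

lemma tendsto_of_forall_Ico_le_le {β : ℕ → ℝ} (hβ : Monotone β) (hβtop : Tendsto β atTop atTop)
    {φ : ℝ → ℝ} {a b : ℕ → ℝ} {l : ℝ} (ha : Tendsto a atTop (𝓝 l)) (hb : Tendsto b atTop (𝓝 l))
    (h : ∀ᶠ n in atTop, ∀ T ∈ Ico (β n) (β (n + 1)), a n ≤ φ T ∧ φ T ≤ b n) :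
    Tendsto φ atTop (𝓝 l) := by
  rw [tendsto_order]
  constructor
  · intro l' hl'
    obtain ⟨N, hN⟩ := eventually_atTop.1 ((ha.eventually (lt_mem_nhds hl')).and h)
    filter_upwards [eventually_ge_atTop (β N)] with T hT
    obtain ⟨n, hn, hTn⟩ := hβ.exists_mem_Ico_of_tendsto_atTop hβtop hT
    exact (hN n hn).1.trans_le ((hN n hn).2 T hTn).1
  · intro l' hl'
    obtain ⟨N, hN⟩ := eventually_atTop.1 ((hb.eventually (gt_mem_nhds hl')).and h)
    filter_upwards [eventually_ge_atTop (β N)] with T hT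
    obtain ⟨n, hn, hTn⟩ := hβ.exists_mem_Ico_of_tendsto_atTop hβtop hT
    exact ((hN n hn).2 T hTn).2.trans_lt (hN n hn).1

lemma tendsto_div_of_tendsto_comp_div {β : ℕ → ℝ} {G : ℝ → ℝ} {c L : ℝ} (hβ : Monotone β)
    (hc : 0 < c) (hβc : Tendsto (fun n : ℕ => β n / n) atTop (𝓝 c))
    (hG : MonotoneOn G (Ici 0)) (hG0 : 0 ≤ G 0)
    (hGL : Tendsto (fun n : ℕ => G (β n) / n) atTop (𝓝 L)) :
    Tendsto (fun T => G T / T) atTop (𝓝 (L / c)) := by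
  have hβtop := tendsto_atTop_of_tendsto_div_natCast hc hβc
  have hGnn : ∀ {t}, 0 ≤ t → 0 ≤ G t := fun ht => hG0.trans (hG self_mem_Ici ht ht)
  refine tendsto_of_forall_Ico_le_le hβ hβtop
    (a := fun n => G (β n) / β (n + 1)) (b := fun n => G (β (n + 1)) / β n) ?_ ?_ ?_
  · refine (hGL.div (tendsto_comp_succ_div_natCast_iff.2 hβc) hc.ne').congr' ?_
    filter_upwards [eventually_ne_atTop 0] with n hn
    exact div_div_div_cancel_right₀ (Nat.cast_ne_zero.2 hn) _ _
  · refine ((tendsto_comp_succ_div_natCast_iff.2 hGL).div hβc hc.ne').congr' ?_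
    filter_upwards [eventually_ne_atTop 0] with n hn
    exact div_div_div_cancel_right₀ (Nat.cast_ne_zero.2 hn) _ _
  · filter_upwards [hβtop.eventually_gt_atTop 0] with n hn T ⟨hnT, hTn⟩
    have hT : 0 < T := hn.trans_le hnT
    constructor
    · calc G (β n) / β (n + 1) ≤ G (β n) / T := div_le_div_of_nonneg_left (hGnn hn.le) hT hTn.le
        _ ≤ G T / T := div_le_div_of_nonneg_right (hG hn.le hT.le hnT) hT.le
    · calc G T / T ≤ G (β (n + 1)) / T :=
          div_le_div_of_nonneg_right (hG hT.le (hT.trans hTn).le hTn.le) hT.le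
        _ ≤ G (β (n + 1)) / β n := div_le_div_of_nonneg_left (hGnn (hT.trans hTn).le) hn hnT

section SamplePath

variable {A : ℝ → ℝ}

lemma eqOn_Ioo_ite_age_le {a b X : ℝ} (hA : ∀ t ∈ Ico a b, A t = X + (t - a)) (x : ℝ) :
    EqOn (fun t => if t + (X - a) ≤ x then (1 : ℝ) else 0)
      (fun t => if A t ≤ x then (1 : ℝ) else 0) (Ioo a b) := fun t ht => by
  dsimp only; rw [hA t (Ioo_subset_Ico_self ht), add_sub_left_comm]

lemma intervalIntegrable_ite_age_le {a b X : ℝ} (hab : a ≤ b)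
    (hA : ∀ t ∈ Ico a b, A t = X + (t - a)) (x : ℝ) :
    IntervalIntegrable (fun t => if A t ≤ x then (1 : ℝ) else 0) volume a b :=
  ((antitone_ite_le x).comp_monotone (monotone_id.add_const _)).intervalIntegrable.congr_uIoo
    (uIoo_of_le hab ▸ eqOn_Ioo_ite_age_le hA x)

lemma integral_ite_age_le {a b X : ℝ} (hab : a ≤ b) (hA : ∀ t ∈ Ico a b, A t = X + (t - a))
    (x : ℝ) :
    ∫ t in a..b, (if A t ≤ x then (1 : ℝ) else 0) =
      max (x - X) 0 - max (x - (X + (b - a))) 0 := by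
  rw [← intervalIntegral.integral_congr_Ioo_of_le hab (eqOn_Ioo_ite_age_le hA x),
    intervalIntegral.integral_comp_add_right (fun s => if s ≤ x then (1 : ℝ) else 0),
    intervalIntegral_ite_le (by linarith), add_sub_cancel,
    show b + (X - a) = X + (b - a) by ring]
  simp only [min_def, max_def]
  split_ifs <;> linarith

variable {β X : ℕ → ℝ}

lemma intervalIntegrable_ite_age_le_of_tendsto (hβ : Monotone β) (hβtop : Tendsto β atTop atTop)
    (hA : ∀ n, ∀ t ∈ Ico (β n) (β (n + 1)), A t = X n + (t - β n)) (x : ℝ) {T : ℝ}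
    (hT : β 0 ≤ T) :
    IntervalIntegrable (fun t => if A t ≤ x then (1 : ℝ) else 0) volume (β 0) T := by
  obtain ⟨N, hN⟩ := (hβtop.eventually_ge_atTop T).exists
  exact (IntervalIntegrable.trans_iterate fun n _ =>
    intervalIntegrable_ite_age_le (hβ n.le_succ) (hA n) x).mono_set
      (uIcc_subset_uIcc_left (mem_uIcc_of_le hT hN))

lemma integral_ite_age_le_eq_sum (hβ : Monotone β)
    (hA : ∀ n, ∀ t ∈ Ico (β n) (β (n + 1)), A t = X n + (t - β n)) (x : ℝ) (N : ℕ) :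
    ∫ t in β 0..β N, (if A t ≤ x then (1 : ℝ) else 0) =
      ∑ n ∈ Finset.range N, (max (x - X n) 0 - max (x - (X n + (β (n + 1) - β n))) 0) := by
  rw [← intervalIntegral.sum_integral_adjacent_intervals fun n _ =>
    intervalIntegrable_ite_age_le (hβ n.le_succ) (hA n) x]
  exact Finset.sum_congr rfl fun n _ => integral_ite_age_le (hβ n.le_succ) (hA n) x

end SamplePath

/-- General sample-path formula for the distribution of the age of information.
The age process is `A t = X n + (t - β n)` on `[β n, β (n+1))`, the peak ages are
`A_peak (n+1) = X n + (β (n+1) - β n)`.  If `β n / n → 1/λ` with `0 < λ < ∞` and the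
asymptotic frequency distributions `FP` of the peak ages and `FX` of the post-update
ages exist, then the asymptotic frequency distribution of the age exists and equals
`x ↦ λ ∫_0^x (FX y - FP y) dy`. -/
theorem stmt_1 (β : ℕ → ℝ) (X : ℕ → ℝ) (A : ℝ → ℝ)
    (hβ0 : β 0 = 0) (hβmono : StrictMono β)
    (hX : ∀ n, 0 ≤ X n)
    (hA : ∀ n : ℕ, ∀ t ∈ Set.Ico (β n) (β (n + 1)), A t = X n + (t - β n))
    (lam : ℝ) (hlam : 0 < lam)
    (hβlim : Tendsto (fun n : ℕ => β n / n) atTop (𝓝 (1 / lam)))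
    (FP FX : ℝ → ℝ)
    (hFP : ∀ x : ℝ, 0 ≤ x →
      Tendsto (fun N : ℕ => (1 / (N : ℝ)) * ∑ n ∈ Finset.range N,
        (if X n + (β (n + 1) - β n) ≤ x then (1 : ℝ) else 0)) atTop (𝓝 (FP x)))
    (hFX : ∀ x : ℝ, 0 ≤ x →
      Tendsto (fun N : ℕ => (1 / (N : ℝ)) * ∑ n ∈ Finset.range N,
        (if X (n + 1) ≤ x then (1 : ℝ) else 0)) atTop (𝓝 (FX x))) :
    ∀ x : ℝ, 0 ≤ x →
      Tendsto (fun T : ℝ => (1 / T) * ∫ t in (0 : ℝ)..T, (if A t ≤ x then (1 : ℝ) else 0))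
        atTop (𝓝 (lam * ∫ y in (0 : ℝ)..x, (FX y - FP y))) := by
  intro x hx
  have hβ := hβmono.monotone
  have hP : ∀ n, 0 ≤ X n + (β (n + 1) - β n) := fun n =>
    add_nonneg (hX n) (sub_nonneg.2 (hβ n.le_succ))
  have hmean : ∀ N : ℕ, (∫ t in (0 : ℝ)..β N, (if A t ≤ x then (1 : ℝ) else 0)) / N =
      ∫ y in (0 : ℝ)..x,
        (empiricalCDF X N y - empiricalCDF (fun n => X n + (β (n + 1) - β n)) N y) := by
    intro N
    have hsum := integral_ite_age_le_eq_sum hβ hA x N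
    rw [hβ0] at hsum
    rw [hsum, intervalIntegral.integral_sub monotone_empiricalCDF.intervalIntegrable
      monotone_empiricalCDF.intervalIntegrable, integral_empiricalCDF hX hx,
      integral_empiricalCDF hP hx, Finset.sum_sub_distrib, sub_div]
  have hnonneg : ∀ y ∈ uIoc 0 x, 0 ≤ y := fun y hy => (uIoc_of_le hx ▸ hy).1.le
  have hlim := (tendsto_integral_empiricalCDF_sub
    (fun y hy => tendsto_sum_range_div_of_succ <| by
      simpa only [one_div_mul_eq_div] using hFX y (hnonneg y hy))
    (fun y hy => by
      simpa only [empiricalCDF, one_div_mul_eq_div] using hFP y (hnonneg y hy))).congr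
    fun N => (hmean N).symm
  have hG := tendsto_div_of_tendsto_comp_div hβ (one_div_pos.2 hlam) hβlim
    (monotoneOn_integral_of_nonneg (fun t => by positivity) fun T hT =>
      hβ0 ▸ intervalIntegrable_ite_age_le_of_tendsto hβ
        (tendsto_atTop_of_tendsto_div_natCast (one_div_pos.2 hlam) hβlim) hA x (hβ0 ▸ hT))
    (by simp) hlim
  simpa only [one_div_mul_eq_div, div_div_eq_mul_div, div_one, mul_comm lam] using hG
end

section
/- Let D, G, H be independent nonnegative random variables on a probability space, and let s > 0. Then E[exp(−s(max(D,G) + H))] = ( ∫_{[0,∞)} e^{−sx} P(G ≤ x) dμ_D(x) + ∫_{[0,∞)} e^{−sx} P(D ≤ x) dμ_G(x) − E[1{D = G} e^{−sG}] ) · E[e^{−sH}], where μ_D and μ_G denote the distributions (laws) of D and G respectively. -/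
/-!
Since `H` is independent of `(D, G)`, the transform factors as
`E[e^{-s max(D,G)}] ⬝ E[e^{-sH}]`. Inclusion–exclusion on the events `G ≤ D` and `D ≤ G` (which
overlap in `D = G`) splits `e^{-s max(D,G)}` into three terms, and Fubini over the product law
of the independent pair `(D, G)` turns `E[1{G ≤ D} e^{-sD}]` into `∫ e^{-sx} P(G ≤ x) dμ_D(x)`,
and symmetrically.
-/

open MeasureTheory ProbabilityTheory

lemma apply_max_eq_ite_add_ite_sub_ite {α β : Type*} [LinearOrder α] [AddGroup β] (f : α → β)
    (a b : α) :
    f (max a b) =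
      (if b ≤ a then f a else 0) + (if a ≤ b then f b else 0) - (if a = b then f b else 0) := by
  rcases lt_trichotomy a b with h | rfl | h
  · simp [h.not_ge, h.le, h.ne]
  · simp
  · simp [h.le, h.not_ge, h.ne']

section
variable {Ω : Type*} [MeasurableSpace Ω] {μ : Measure Ω}

lemma integrable_exp_neg_mul [IsFiniteMeasure μ] {X : Ω → ℝ} (hX : AEMeasurable X μ)
    (hX0 : ∀ᵐ ω ∂μ, 0 ≤ X ω) {s : ℝ} (hs : 0 ≤ s) :
    Integrable (fun ω ↦ Real.exp (-(s * X ω))) μ := by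
  refine .of_bound (by fun_prop) 1 ?_
  filter_upwards [hX0] with ω hω
  rw [Real.norm_eq_abs, abs_of_pos (Real.exp_pos _), Real.exp_le_one_iff, neg_nonpos]
  exact mul_nonneg hs hω

lemma MeasureTheory.Integrable.ite_zero {f : Ω → ℝ} (hf : Integrable f μ) {p : Ω → Prop}
    [DecidablePred p] (hp : MeasurableSet {ω | p ω}) :
    Integrable (fun ω ↦ if p ω then f ω else 0) μ := by
  refine (hf.indicator hp).congr (.of_forall fun ω ↦ ?_)
  simp [Set.indicator_apply]

lemma ProbabilityTheory.IndepFun.integral_ite_le_eq_integral_mul_measureReal [IsFiniteMeasure μ]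
    {D G : Ω → ℝ} (hD : AEMeasurable D μ) (hG : AEMeasurable G μ) (hDG : IndepFun D G μ) {φ : ℝ → ℝ}
    (hφ : Integrable φ (μ.map D)) :
    ∫ ω, (if G ω ≤ D ω then φ (D ω) else 0) ∂μ = ∫ x, φ x * μ.real {ω | G ω ≤ x} ∂(μ.map D) := by
  set f : ℝ × ℝ → ℝ := {p | p.2 ≤ p.1}.indicator (φ ∘ Prod.fst)
  have hf : Integrable f ((μ.map D).prod (μ.map G)) :=
    (hφ.comp_fst _).indicator (measurableSet_le measurable_snd measurable_fst)
  have hsection (x : ℝ) : (fun y ↦ f (x, y)) = (Set.Iic x).indicator fun _ ↦ φ x := by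
    ext y
    simp [f, Set.indicator_apply]
  calc ∫ ω, (if G ω ≤ D ω then φ (D ω) else 0) ∂μ
      = ∫ p, f p ∂(μ.map fun ω ↦ (D ω, G ω)) := by
        rw [integral_map (hD.prodMk hG) (by rw [hDG.map_prod_eq_prod_map_map hD hG]; exact hf.1)]
        simp [f, Set.indicator_apply]
    _ = ∫ x, ∫ y, f (x, y) ∂(μ.map G) ∂(μ.map D) := by
        rw [hDG.map_prod_eq_prod_map_map hD hG, integral_prod f hf]
    _ = ∫ x, φ x * μ.real {ω | G ω ≤ x} ∂(μ.map D) := by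
        refine integral_congr_ae (.of_forall fun x ↦ ?_)
        simp only [hsection, integral_indicator_const _ measurableSet_Iic, smul_eq_mul,
          map_measureReal_apply_of_aemeasurable hG measurableSet_Iic, mul_comm]
        rfl
end

theorem stmt_3_general {Ω : Type*} [MeasurableSpace Ω] (μ : Measure Ω) [IsProbabilityMeasure μ]
    (D G H : Ω → ℝ) (hD : Measurable D) (hG : Measurable G) (hH : Measurable H)
    (hDpos : ∀ ω, 0 ≤ D ω) (hGpos : ∀ ω, 0 ≤ G ω)
    (hindep : iIndepFun ![D, G, H] μ)
    (s : ℝ) (hs : 0 < s) :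
    ∫ ω, Real.exp (-(s * (max (D ω) (G ω) + H ω))) ∂μ =
      ((∫ x, Real.exp (-(s * x)) * (μ {ω | G ω ≤ x}).toReal ∂(μ.map D)) +
        (∫ x, Real.exp (-(s * x)) * (μ {ω | D ω ≤ x}).toReal ∂(μ.map G)) -
        ∫ ω, (if D ω = G ω then Real.exp (-(s * G ω)) else 0) ∂μ) *
      ∫ ω, Real.exp (-(s * H ω)) ∂μ := by
  have hmeas : ∀ i, Measurable (![D, G, H] i) := fun i ↦ by fin_cases i <;> assumption
  have hDG : IndepFun D G μ := by simpa using hindep.indepFun (i := 0) (j := 1) (by decide)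
  have hDG_H : IndepFun (fun ω ↦ (D ω, G ω)) H μ := by
    simpa using hindep.indepFun_prodMk hmeas 0 1 2 (by decide) (by decide)
  have hexp {X : Ω → ℝ} (hX : Measurable X) (hX0 : ∀ ω, 0 ≤ X ω) :=
    integrable_exp_neg_mul (μ := μ) hX.aemeasurable (.of_forall hX0) hs.le
  have hexp_map {X : Ω → ℝ} (hX : Measurable X) (hX0 : ∀ ω, 0 ≤ X ω) :
      Integrable (fun x ↦ Real.exp (-(s * x))) (μ.map X) :=
    (integrable_map_measure (by fun_prop) hX.aemeasurable).mpr (hexp hX hX0)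
  have hsplit : ∫ ω, Real.exp (-(s * (max (D ω) (G ω) + H ω))) ∂μ =
      (∫ ω, Real.exp (-(s * max (D ω) (G ω))) ∂μ) * ∫ ω, Real.exp (-(s * H ω)) ∂μ := by
    simp only [mul_add, neg_add, Real.exp_add]
    exact (hDG_H.comp (φ := fun p : ℝ × ℝ ↦ Real.exp (-(s * max p.1 p.2)))
      (ψ := fun x ↦ Real.exp (-(s * x))) (by fun_prop) (by fun_prop)).integral_mul_eq_mul_integral
      (by fun_prop) (by fun_prop)
  rw [hsplit]
  congr 1
  have hGleD := (hexp hD hDpos).ite_zero (measurableSet_le hG hD)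
  have hDleG := (hexp hG hGpos).ite_zero (measurableSet_le hD hG)
  have hDeqG := (hexp hG hGpos).ite_zero (measurableSet_eq_fun hD hG)
  simp only [apply_max_eq_ite_add_ite_sub_ite (fun x ↦ Real.exp (-(s * x)))]
  rw [integral_sub (f := fun ω ↦ _ + _) (hGleD.add hDleG) hDeqG, integral_add hGleD hDleG,
    hDG.integral_ite_le_eq_integral_mul_measureReal hD.aemeasurable hG.aemeasurable
      (hexp_map hD hDpos),
    hDG.symm.integral_ite_le_eq_integral_mul_measureReal hG.aemeasurable hD.aemeasurable
      (hexp_map hG hGpos)]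
  simp only [measureReal_def]

/-- LST of the peak AoI `max(D,G) + H` for mutually independent nonnegative random
variables `D`, `G`, `H`:
`E[e^{-s(max(D,G)+H)}] = (∫ e^{-sx} P(G ≤ x) dμ_D(x) + ∫ e^{-sx} P(D ≤ x) dμ_G(x)
  - E[1{D=G} e^{-sG}]) ⬝ E[e^{-sH}]`. -/
theorem stmt_3 {Ω : Type*} [MeasurableSpace Ω] (μ : Measure Ω) [IsProbabilityMeasure μ]
    (D G H : Ω → ℝ) (hD : Measurable D) (hG : Measurable G) (hH : Measurable H)
    (hDpos : ∀ ω, 0 ≤ D ω) (hGpos : ∀ ω, 0 ≤ G ω) (hHpos : ∀ ω, 0 ≤ H ω)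
    (hindep : iIndepFun ![D, G, H] μ)
    (s : ℝ) (hs : 0 < s) :
    ∫ ω, Real.exp (-(s * (max (D ω) (G ω) + H ω))) ∂μ =
      ((∫ x, Real.exp (-(s * x)) * (μ {ω | G ω ≤ x}).toReal ∂(μ.map D)) +
        (∫ x, Real.exp (-(s * x)) * (μ {ω | D ω ≤ x}).toReal ∂(μ.map G)) -
        ∫ ω, (if D ω = G ω then Real.exp (-(s * G ω)) else 0) ∂μ) *
      ∫ ω, Real.exp (-(s * H ω)) ∂μ :=
  stmt_3_general μ D G H hD hG hH hDpos hGpos hindep s hs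
end

section
/- Let G be a nonnegative random variable with finite mean E[G] > 0 and LST g*(s) = E[e^{−sG}]. Let μ > 0, let γ ∈ (0,1) satisfy γ = g*(μ − μγ), and suppose D is exponentially distributed with rate μ(1−γ) (so d*(s) = (μ−μγ)/(s+μ−μγ)), H is exponentially distributed with rate μ, and D, G, H are mutually independent. Set A_peak = max(D,G) + H and define ρ = 1/(μE[G]) and g̃*(s) = (1 − g*(s))/(sE[G]). Then for every s > 0: (d*(s) − E[e^{−s A_peak}])/(s E[G]) = [ ρ d*(s) + g̃*(s) − g̃*(s + μ − μγ) ] · μ/(s+μ). -/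
/-!
By independence, the transform of `max(D, G) + H` factors as `E[e^{-s max(D,G)}] · μ/(μ+s)`.
For a fixed `y ≥ 0`, splitting the exponential variable `D` (rate `ν = μ(1-γ)`) at `y` gives
`E[e^{-s max(D,y)}] = e^{-sy} - s/(s+ν) · e^{-(s+ν)y}`; integrating against the law of `G` yields
`E[e^{-s max(D,G)}] = g*(s) - s/(s+ν) · g*(s+ν)`, and the claim becomes a rational identity in
`g*(s)` and `g*(s+ν)`.
-/

open MeasureTheory ProbabilityTheory Set Real

namespace ProbabilityTheory

variable {Ω : Type*} [MeasurableSpace Ω] {μ : Measure Ω}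

lemma integrable_exp_neg_mul_of_nonneg [IsFiniteMeasure μ] {X : Ω → ℝ} (hX : AEMeasurable X μ)
    (hXnn : ∀ᵐ ω ∂μ, 0 ≤ X ω) {s : ℝ} (hs : 0 ≤ s) :
    Integrable (fun ω => exp (-(s * X ω))) μ := by
  refine .of_bound (by fun_prop) 1 ?_
  filter_upwards [hXnn] with ω hω
  rw [norm_of_nonneg (exp_pos _).le, exp_le_one_iff, neg_nonpos]
  exact mul_nonneg hs hω

lemma map_eq_expMeasure_of_cdf [IsFiniteMeasure μ] {X : Ω → ℝ} (hX : Measurable X) {r : ℝ}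
    (hr : 0 < r)
    (hcdf : ∀ x, 0 ≤ x → μ {ω | X ω ≤ x} = ENNReal.ofReal (1 - exp (-(r * x)))) :
    μ.map X = expMeasure r := by
  have := isProbabilityMeasure_expMeasure hr
  refine Measure.ext_of_Iic _ _ fun a => ?_
  rw [Measure.map_apply hX measurableSet_Iic, ← ofReal_cdf, cdf_expMeasure_eq hr]
  split_ifs with ha
  · exact hcdf a ha
  · have hnull : μ {ω | X ω ≤ 0} = 0 := by simpa using hcdf 0 le_rfl
    rw [ENNReal.ofReal_zero]
    exact measure_mono_null (fun ω (hω : X ω ≤ a) => (show X ω ≤ 0 by linarith)) hnull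

lemma ae_pos_expMeasure {r : ℝ} (hr : 0 < r) : ∀ᵐ x ∂expMeasure r, 0 < x := by
  have := isProbabilityMeasure_expMeasure hr
  rw [ae_iff]
  simp only [not_lt]
  change expMeasure r (Iic 0) = 0
  rw [← ofReal_cdf, cdf_expMeasure_eq hr]
  simp

lemma setIntegral_expMeasure {r : ℝ} (hr : 0 < r) {S : Set ℝ} (hS : MeasurableSet S)
    (g : ℝ → ℝ) :
    ∫ x in S, g x ∂expMeasure r = ∫ x in S ∩ Ici 0, r * exp (-(r * x)) * g x := by
  have hdens : ∀ x,
      (exponentialPDF r x).toReal = (Ici 0).indicator (fun x => r * exp (-(r * x))) x := by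
    intro x
    rw [exponentialPDF_eq, ENNReal.toReal_ofReal (by split_ifs <;> positivity)]
    simp [indicator]
  change ∫ x, g x ∂(volume.withDensity (exponentialPDF r)).restrict S = _
  rw [restrict_withDensity hS,
    integral_withDensity_eq_integral_toReal_smul (f := exponentialPDF r)
      (measurable_exponentialPDFReal r).ennreal_ofReal (ae_of_all _ fun _ => ENNReal.ofReal_lt_top)]
  simp_rw [hdens, smul_eq_mul, ← indicator_mul_left]
  rw [setIntegral_indicator measurableSet_Ici]

lemma setIntegral_Ioi_exp_neg_mul_expMeasure {r s y : ℝ} (hr : 0 < r) (hrs : 0 < r + s)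
    (hy : 0 ≤ y) :
    ∫ x in Ioi y, exp (-(s * x)) ∂expMeasure r = r / (r + s) * exp (-((r + s) * y)) := by
  rw [setIntegral_expMeasure hr measurableSet_Ioi,
    inter_eq_left.mpr (Ioi_subset_Ici_self.trans (Ici_subset_Ici.mpr hy))]
  have hcomb : ∀ x, r * exp (-(r * x)) * exp (-(s * x)) = r * exp (-(r + s) * x) := by
    intro x
    rw [mul_assoc, ← exp_add]
    ring_nf
  simp_rw [hcomb]
  rw [integral_const_mul, integral_exp_mul_Ioi (by linarith), neg_mul, neg_div_neg_eq]
  ring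

lemma integral_exp_neg_mul_expMeasure {r s : ℝ} (hr : 0 < r) (hrs : 0 < r + s) :
    ∫ x, exp (-(s * x)) ∂expMeasure r = r / (r + s) := by
  rw [← Measure.restrict_eq_self_of_ae_mem (s := Ioi 0) (ae_pos_expMeasure hr),
    setIntegral_Ioi_exp_neg_mul_expMeasure hr hrs le_rfl]
  simp

lemma integral_exp_neg_mul_max_expMeasure {r s y : ℝ} (hr : 0 < r) (hs : 0 ≤ s) (hy : 0 ≤ y) :
    ∫ x, exp (-(s * max x y)) ∂expMeasure r =
      exp (-(s * y)) - s / (s + r) * exp (-((s + r) * y)) := by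
  have := isProbabilityMeasure_expMeasure hr
  have hint : Integrable (fun x => exp (-(s * max x y))) (expMeasure r) :=
    integrable_exp_neg_mul_of_nonneg (by fun_prop)
      (ae_of_all _ fun x => hy.trans (le_max_right x y)) hs
  have hlow : ∫ x in Iic y, exp (-(s * max x y)) ∂expMeasure r =
      exp (-(s * y)) * (1 - exp (-(r * y))) := by
    rw [setIntegral_congr_fun measurableSet_Iic fun x (hx : x ≤ y) => by rw [max_eq_right hx],
      setIntegral_const, smul_eq_mul, ← cdf_eq_real, cdf_expMeasure_eq hr, if_pos hy, mul_comm]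
  have hhigh : ∫ x in Ioi y, exp (-(s * max x y)) ∂expMeasure r =
      r / (r + s) * exp (-((r + s) * y)) := by
    rw [setIntegral_congr_fun measurableSet_Ioi fun x (hx : y < x) => by rw [max_eq_left hx.le],
      setIntegral_Ioi_exp_neg_mul_expMeasure hr (by linarith) hy]
  have hexp : exp (-((s + r) * y)) = exp (-(s * y)) * exp (-(r * y)) := by
    rw [← exp_add]; ring_nf
  rw [← integral_add_compl measurableSet_Iic hint, compl_Iic, hlow, hhigh, add_comm r s, hexp]
  field_simp
  ring

lemma IndepFun.integral_comp_eq_integral_integral [IsFiniteMeasure μ] {α β E : Type*}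
    [MeasurableSpace α] [MeasurableSpace β] [NormedAddCommGroup E] [NormedSpace ℝ E]
    {X : Ω → α} {Y : Ω → β} (hXY : IndepFun X Y μ) (hX : AEMeasurable X μ)
    (hY : AEMeasurable Y μ) {f : α × β → E} (hf : StronglyMeasurable f)
    (hfi : Integrable (fun ω => f (X ω, Y ω)) μ) :
    ∫ ω, f (X ω, Y ω) ∂μ = ∫ x, ∫ y, f (x, y) ∂μ.map Y ∂μ.map X := by
  have hlaw := (indepFun_iff_map_prod_eq_prod_map_map hX hY).mp hXY
  have hfi' : Integrable f ((μ.map X).prod (μ.map Y)) := by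
    rw [← hlaw]
    exact (integrable_map_measure hf.aestronglyMeasurable (hX.prodMk hY)).mpr hfi
  rw [← integral_prod f hfi', ← hlaw, integral_map (hX.prodMk hY) hf.aestronglyMeasurable]

lemma IndepFun.integral_exp_neg_mul_add {X Y : Ω → ℝ} (hXY : IndepFun X Y μ)
    (hX : AEMeasurable X μ) (hY : AEMeasurable Y μ) {m s : ℝ} (hm : 0 < m) (hms : 0 < m + s)
    (hYlaw : μ.map Y = expMeasure m) :
    ∫ ω, exp (-(s * (X ω + Y ω))) ∂μ = (∫ ω, exp (-(s * X ω)) ∂μ) * (m / (m + s)) := by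
  have hexp : Measurable fun x : ℝ => exp (-(s * x)) := by fun_prop
  have hprod := (hXY.comp hexp hexp).integral_fun_mul_eq_mul_integral
    (hexp.comp_aemeasurable hX).aestronglyMeasurable
    (hexp.comp_aemeasurable hY).aestronglyMeasurable
  simp only [Function.comp_apply] at hprod
  simp_rw [mul_add, neg_add, exp_add]
  rw [hprod, ← integral_exp_neg_mul_expMeasure hm hms, ← hYlaw, integral_map hY (by fun_prop)]

lemma IndepFun.integral_exp_neg_mul_max [IsFiniteMeasure μ] {G D : Ω → ℝ}
    (hGD : IndepFun G D μ) (hG : AEMeasurable G μ) (hD : AEMeasurable D μ)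
    (hGnn : ∀ᵐ ω ∂μ, 0 ≤ G ω) {r s : ℝ} (hr : 0 < r) (hs : 0 ≤ s) (hDlaw : μ.map D = expMeasure r) :
    ∫ ω, exp (-(s * max (D ω) (G ω))) ∂μ =
      ∫ ω, exp (-(s * G ω)) ∂μ - s / (s + r) * ∫ ω, exp (-((s + r) * G ω)) ∂μ := by
  have hmax : Integrable (fun ω => exp (-(s * max (D ω) (G ω)))) μ :=
    integrable_exp_neg_mul_of_nonneg (by fun_prop)
      (hGnn.mono fun _ hω => hω.trans (le_max_right _ _)) hs
  have hGnn' : ∀ᵐ y ∂μ.map G, 0 ≤ y := (ae_map_iff hG measurableSet_Ici).mpr hGnn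
  calc ∫ ω, exp (-(s * max (D ω) (G ω))) ∂μ
      = ∫ y, ∫ x, exp (-(s * max x y)) ∂expMeasure r ∂μ.map G := by
        rw [← hDlaw]
        exact hGD.integral_comp_eq_integral_integral hG hD
          (f := fun p => exp (-(s * max p.2 p.1))) (by fun_prop) hmax
    _ = ∫ y, (exp (-(s * y)) - s / (s + r) * exp (-((s + r) * y))) ∂μ.map G := by
        refine integral_congr_ae ?_
        filter_upwards [hGnn'] with y hy
        exact integral_exp_neg_mul_max_expMeasure hr hs hy
    _ = ∫ ω, exp (-(s * G ω)) ∂μ - s / (s + r) * ∫ ω, exp (-((s + r) * G ω)) ∂μ := by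
        rw [integral_map hG (by fun_prop), integral_sub, integral_const_mul]
        · exact integrable_exp_neg_mul_of_nonneg hG hGnn hs
        · exact (integrable_exp_neg_mul_of_nonneg hG hGnn (by positivity)).const_mul _

end ProbabilityTheory

theorem stmt_6_general {Ω : Type*} [MeasurableSpace Ω] (μ : Measure Ω) [IsProbabilityMeasure μ]
    (D G H : Ω → ℝ) (hD : Measurable D) (hG : Measurable G) (hH : Measurable H)
    (hGpos : ∀ ω, 0 ≤ G ω)
    (EG : ℝ)
    (gstar : ℝ → ℝ) (hgstar : ∀ s : ℝ, gstar s = ∫ ω, Real.exp (-(s * G ω)) ∂μ)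
    (mu : ℝ) (hmu : 0 < mu)
    (γ : ℝ) (hγ : γ ∈ Set.Ioo (0 : ℝ) 1)
    (hDexp : ∀ x : ℝ, 0 ≤ x →
      μ {ω | D ω ≤ x} = ENNReal.ofReal (1 - Real.exp (-(mu * (1 - γ) * x))))
    (hHexp : ∀ x : ℝ, 0 ≤ x →
      μ {ω | H ω ≤ x} = ENNReal.ofReal (1 - Real.exp (-(mu * x))))
    (hindep : iIndepFun ![D, G, H] μ)
    (dstar gt : ℝ → ℝ)
    (hdstar : ∀ s : ℝ, dstar s = (mu - mu * γ) / (s + mu - mu * γ))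
    (hgt : ∀ s : ℝ, gt s = (1 - gstar s) / (s * EG)) :
    ∀ s : ℝ, 0 < s →
      (dstar s - ∫ ω, Real.exp (-(s * (max (D ω) (G ω) + H ω))) ∂μ) / (s * EG) =
        ((1 / (mu * EG)) * dstar s + gt s - gt (s + mu - mu * γ)) * (mu / (s + mu)) := by
  intro s hs
  have hν : 0 < mu - mu * γ := by nlinarith [hγ.2]
  have hDlaw : μ.map D = expMeasure (mu - mu * γ) :=
    map_eq_expMeasure_of_cdf hD hν fun x hx => by rw [hDexp x hx, mul_one_sub]
  have hHlaw : μ.map H = expMeasure mu := map_eq_expMeasure_of_cdf hH hmu hHexp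
  have hmeas : ∀ i, Measurable (![D, G, H] i) := fun i => by fin_cases i <;> assumption
  have hGD : IndepFun G D μ := hindep.indepFun (i := 1) (j := 0) (by decide)
  have hMH : IndepFun (fun ω => max (D ω) (G ω)) H μ :=
    (hindep.indepFun_prodMk hmeas 0 1 2 (by decide) (by decide)).comp
      (measurable_fst.max measurable_snd) measurable_id
  rw [hMH.integral_exp_neg_mul_add (by fun_prop) hH.aemeasurable hmu (by linarith) hHlaw,
    hGD.integral_exp_neg_mul_max hG.aemeasurable hD.aemeasurable (ae_of_all _ hGpos) hν hs.le
      hDlaw, ← hgstar, ← hgstar, hdstar, hgt, hgt, add_sub_assoc s mu]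
  generalize mu - mu * γ = ν at hν ⊢
  -- both sides carry the common factor `1 / EG`, so it suffices to compare the cofactors
  have hcofactor :
      (ν / (s + ν) - (gstar s - s / (s + ν) * gstar (s + ν)) * (mu / (mu + s))) / s =
        (ν / (s + ν) / mu + (1 - gstar s) / s - (1 - gstar (s + ν)) / (s + ν)) *
          (mu / (s + mu)) := by
    field_simp
    ring
  simp only [← div_div]
  rw [hcofactor]
  ring

/-- LST of the stationary AoI in the FCFS GI/M/1 queue: with `g*` the LST of the
interarrival time `G`, `γ ∈ (0,1)` the root of `γ = g*(μ-μγ)`, `D` exponential with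
rate `μ(1-γ)` (so `d*(s) = (μ-μγ)/(s+μ-μγ)`), `H` exponential with rate `μ`,
`D, G, H` mutually independent, `A_peak = max(D,G)+H`, `ρ = 1/(μE[G])` and
`g̃*(s) = (1-g*(s))/(sE[G])`, for every `s > 0`,
`(d*(s) - E[e^{-s A_peak}])/(s E[G]) = [ρ d*(s) + g̃*(s) - g̃*(s+μ-μγ)] μ/(s+μ)`. -/
theorem stmt_6 {Ω : Type*} [MeasurableSpace Ω] (μ : Measure Ω) [IsProbabilityMeasure μ]
    (D G H : Ω → ℝ) (hD : Measurable D) (hG : Measurable G) (hH : Measurable H)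
    (hDpos : ∀ ω, 0 ≤ D ω) (hGpos : ∀ ω, 0 ≤ G ω) (hHpos : ∀ ω, 0 ≤ H ω)
    (hGint : Integrable G μ)
    (EG : ℝ) (hEG : EG = ∫ ω, G ω ∂μ) (hEGpos : 0 < EG)
    (gstar : ℝ → ℝ) (hgstar : ∀ s : ℝ, gstar s = ∫ ω, Real.exp (-(s * G ω)) ∂μ)
    (mu : ℝ) (hmu : 0 < mu)
    (γ : ℝ) (hγ : γ ∈ Set.Ioo (0 : ℝ) 1) (hγfix : γ = gstar (mu - mu * γ))
    (hDexp : ∀ x : ℝ, 0 ≤ x →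
      μ {ω | D ω ≤ x} = ENNReal.ofReal (1 - Real.exp (-(mu * (1 - γ) * x))))
    (hHexp : ∀ x : ℝ, 0 ≤ x →
      μ {ω | H ω ≤ x} = ENNReal.ofReal (1 - Real.exp (-(mu * x))))
    (hindep : iIndepFun ![D, G, H] μ)
    (dstar gt : ℝ → ℝ)
    (hdstar : ∀ s : ℝ, dstar s = (mu - mu * γ) / (s + mu - mu * γ))
    (hgt : ∀ s : ℝ, gt s = (1 - gstar s) / (s * EG)) :
    ∀ s : ℝ, 0 < s →
      (dstar s - ∫ ω, Real.exp (-(s * (max (D ω) (G ω) + H ω))) ∂μ) / (s * EG) =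
        ((1 / (mu * EG)) * dstar s + gt s - gt (s + mu - mu * γ)) * (mu / (s + mu)) :=
  stmt_6_general μ D G H hD hG hH hGpos EG gstar hgstar mu hmu γ hγ hDexp hHexp hindep dstar gt
    hdstar hgt
end

section
/- Let G, D′, H be nonnegative integrable random variables on a probability space such that G is independent of the pair (D′, H), E[G²] < ∞, and define D = 1{G ≤ D′}(D′ − G) + H. Assume D has the same distribution as D′ (with finite mean E[D]). Then −E[G]·E[D]·P(G < E[G]) ≤ Cov(G, D) ≤ 0. -/
/-!
Write `m = E[G]` and `W = (D' - G)⁺`, so that `D = W + H`. Since `H` is independent of `G`,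
`Cov(G, D) = E[(G - m) W]`. As `W` is antitone in `G`, `(G - m) W ≤ (G - m) (D' - m)⁺` pointwise,
and the right side has mean zero by independence; this gives `Cov(G, D) ≤ 0`. Conversely
`(G - m) W ≥ -m 1{G < m} D'` pointwise, whose mean is `-m P(G < m) E[D']`, and `E[D'] = E[D]`
by stationarity.
-/

open MeasureTheory ProbabilityTheory

lemma ite_le_sub_else_zero_eq_max {a b : ℝ} :
    (if a ≤ b then b - a else 0) = max (b - a) 0 := by
  split_ifs with h
  · exact (max_eq_left (sub_nonneg.2 h)).symm
  · exact (max_eq_right (by linarith [not_le.1 h])).symm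

lemma MeasureTheory.integral_mul_sub_mul_integral {Ω : Type*} [MeasurableSpace Ω]
    {μ : Measure Ω} {G D : Ω → ℝ} (c : ℝ) (hD : Integrable D μ)
    (hGD : Integrable (fun ω => (G ω - c) * D ω) μ) :
    (∫ ω, G ω * D ω ∂μ) - c * ∫ ω, D ω ∂μ = ∫ ω, (G ω - c) * D ω ∂μ := by
  have hGD' : Integrable (fun ω => G ω * D ω) μ :=
    (hGD.add (hD.const_mul c)).congr (ae_of_all _ fun ω => by simp only [Pi.add_apply]; ring)
  rw [← integral_const_mul, ← integral_sub hGD' (hD.const_mul c)]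
  congr 1 with ω
  ring

namespace ProbabilityTheory

variable {Ω β : Type*} [MeasurableSpace Ω] [MeasurableSpace β] {μ : Measure Ω}

lemma IndepFun.integral_sub_integral_mul_comp_eq_zero [IsProbabilityMeasure μ]
    {X : Ω → ℝ} {Y : Ω → β} {g : β → ℝ} (hXY : X ⟂ᵢ[μ] Y) (hX : Integrable X μ)
    (hY : AEMeasurable Y μ) (hg : AEStronglyMeasurable g (μ.map Y)) :
    ∫ ω, (X ω - μ[X]) * g (Y ω) ∂μ = 0 := by
  refine (hXY.integral_fun_comp_mul_comp (f := fun x => x - μ[X]) hX.aemeasurable hY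
    (by fun_prop) hg).trans ?_
  simp [integral_sub hX (integrable_const _)]

theorem IndepFun.integrable_mul_of_abs_le {X Y Z : Ω → ℝ} (hXY : X ⟂ᵢ[μ] Y)
    (hX : Integrable X μ) (hY : Integrable Y μ) (hZ : AEStronglyMeasurable Z μ)
    (hZY : ∀ ω, |Z ω| ≤ |Y ω|) : Integrable (fun ω => X ω * Z ω) μ :=
  (hXY.integrable_mul hX hY).mono (hX.1.mul hZ) (ae_of_all _ fun ω => by
    simpa only [Pi.mul_apply, norm_mul, Real.norm_eq_abs] using
      mul_le_mul_of_nonneg_left (hZY ω) (abs_nonneg (X ω)))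

theorem IndepFun.integral_mul_add_sub_mul_integral [IsProbabilityMeasure μ] {G W H : Ω → ℝ}
    (hGH : G ⟂ᵢ[μ] H) (hG : Integrable G μ) (hW : Integrable W μ) (hH : Integrable H μ)
    (hGW : Integrable (fun ω => (G ω - μ[G]) * W ω) μ) :
    (∫ ω, G ω * (W ω + H ω) ∂μ) - μ[G] * ∫ ω, W ω + H ω ∂μ = ∫ ω, (G ω - μ[G]) * W ω ∂μ := by
  have hGH' : Integrable (fun ω => (G ω - μ[G]) * H ω) μ :=
    (hGH.comp (measurable_id.sub_const _) measurable_id).integrable_mul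
      (hG.sub (integrable_const _)) hH
  have hGHc : ∫ ω, (G ω - μ[G]) * H ω ∂μ = 0 :=
    hGH.integral_sub_integral_mul_comp_eq_zero (g := id) hG hH.aemeasurable
      aestronglyMeasurable_id
  have hGD : Integrable (fun ω => (G ω - μ[G]) * (W ω + H ω)) μ :=
    (hGW.add hGH').congr (ae_of_all _ fun ω => by simp only [Pi.add_apply, mul_add])
  rw [integral_mul_sub_mul_integral (D := fun ω => W ω + H ω) _ (hW.add hH) hGD]
  simp_rw [mul_add]
  rw [integral_add hGW hGH', hGHc, add_zero]

theorem IndepFun.integral_sub_integral_mul_nonpos_of_antitone [IsProbabilityMeasure μ]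
    {X : Ω → ℝ} {Y : Ω → β} {φ : ℝ → β → ℝ} (hXY : X ⟂ᵢ[μ] Y) (hX : Integrable X μ)
    (hY : AEMeasurable Y μ) (hφ : ∀ y, Antitone (φ · y)) (hφm : Measurable (φ μ[X]))
    (hφY : Integrable (fun ω => φ μ[X] (Y ω)) μ)
    (hint : Integrable (fun ω => (X ω - μ[X]) * φ (X ω) (Y ω)) μ) :
    ∫ ω, (X ω - μ[X]) * φ (X ω) (Y ω) ∂μ ≤ 0 := by
  have hfrozen : Integrable (fun ω => (X ω - μ[X]) * φ μ[X] (Y ω)) μ :=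
    (hXY.comp (measurable_id.sub_const _) hφm).integrable_mul
      (hX.sub (integrable_const _)) hφY
  have hpoint : ∀ ω, (X ω - μ[X]) * φ (X ω) (Y ω) ≤ (X ω - μ[X]) * φ μ[X] (Y ω) := by
    intro ω
    rcases le_total (X ω) μ[X] with h | h
    · exact mul_le_mul_of_nonpos_left (hφ _ h) (sub_nonpos.2 h)
    · exact mul_le_mul_of_nonneg_left (hφ _ h) (sub_nonneg.2 h)
  calc ∫ ω, (X ω - μ[X]) * φ (X ω) (Y ω) ∂μ
      ≤ ∫ ω, (X ω - μ[X]) * φ μ[X] (Y ω) ∂μ := integral_mono hint hfrozen hpoint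
    _ = 0 := hXY.integral_sub_integral_mul_comp_eq_zero hX hY hφm.aestronglyMeasurable

theorem IndepFun.integral_indicator_comp_mul {X Y : Ω → ℝ} (hXY : X ⟂ᵢ[μ] Y)
    (hX : AEMeasurable X μ) (hY : AEMeasurable Y μ) (c : ℝ) :
    ∫ ω, (Set.Iio c).indicator 1 (X ω) * Y ω ∂μ = μ.real {ω | X ω < c} * μ[Y] := by
  have hind : Measurable ((Set.Iio c).indicator (1 : ℝ → ℝ)) :=
    measurable_one.indicator measurableSet_Iio
  refine (hXY.integral_fun_comp_mul_comp (g := id) hX hY hind.aestronglyMeasurable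
    aestronglyMeasurable_id).trans ?_
  rw [← integral_map hX hind.aestronglyMeasurable,
    integral_indicator_one measurableSet_Iio,
    map_measureReal_apply_of_aemeasurable hX measurableSet_Iio]
  rfl

theorem IndepFun.neg_mul_integral_mul_measureReal_le_integral_sub_mul {X Y Z : Ω → ℝ}
    (hXY : X ⟂ᵢ[μ] Y) (hX : AEMeasurable X μ) (hY : Integrable Y μ) (c : ℝ)
    (hX0 : ∀ ω, 0 ≤ X ω) (hZ0 : ∀ ω, 0 ≤ Z ω) (hZY : ∀ ω, Z ω ≤ Y ω)
    (hint : Integrable (fun ω => (X ω - c) * Z ω) μ) :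
    -(c * μ[Y] * μ.real {ω | X ω < c}) ≤ ∫ ω, (X ω - c) * Z ω ∂μ := by
  set I : ℝ → ℝ := (Set.Iio c).indicator 1
  have hI : Measurable I := measurable_one.indicator measurableSet_Iio
  have hIY : Integrable (fun ω => -c * (I (X ω) * Y ω)) μ := by
    refine (hY.bdd_mul (c := 1) (hI.comp_aemeasurable hX).aestronglyMeasurable
      (ae_of_all _ fun ω => ?_)).const_mul (-c)
    by_cases h : X ω < c <;> simp [I, h]
  have hpoint : ∀ ω, -c * (I (X ω) * Y ω) ≤ (X ω - c) * Z ω := by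
    intro ω
    by_cases h : X ω < c
    · simp only [I, Set.indicator_of_mem (Set.mem_Iio.2 h), Pi.one_apply, one_mul]
      nlinarith [hX0 ω, hZ0 ω, hZY ω]
    · simp only [I, Set.indicator_of_notMem (fun h' => h (Set.mem_Iio.1 h')), mul_zero, zero_mul]
      exact mul_nonneg (sub_nonneg.2 (not_lt.1 h)) (hZ0 ω)
  calc -(c * μ[Y] * μ.real {ω | X ω < c})
      = ∫ ω, -c * (I (X ω) * Y ω) ∂μ := by
        rw [integral_const_mul, hXY.integral_indicator_comp_mul hX hY.aemeasurable]; ring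
    _ ≤ ∫ ω, (X ω - c) * Z ω ∂μ := integral_mono hIY hint hpoint

end ProbabilityTheory

theorem stmt_7_general {Ω : Type*} [MeasurableSpace Ω] (μ : Measure Ω) [IsProbabilityMeasure μ]
    (G D' H : Ω → ℝ)
    (hGpos : ∀ ω, 0 ≤ G ω) (hD'pos : ∀ ω, 0 ≤ D' ω)
    (hGint : Integrable G μ) (hD'int : Integrable D' μ) (hHint : Integrable H μ)
    (hindep : IndepFun G (fun ω => (D' ω, H ω)) μ)
    (D : Ω → ℝ)
    (hD : ∀ ω, D ω = (if G ω ≤ D' ω then D' ω - G ω else 0) + H ω)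
    (hstat : μ.map D = μ.map D') :
    -((∫ ω, G ω ∂μ) * (∫ ω, D ω ∂μ) * (μ {ω | G ω < ∫ ω, G ω ∂μ}).toReal) ≤
        (∫ ω, G ω * D ω ∂μ) - (∫ ω, G ω ∂μ) * ∫ ω, D ω ∂μ ∧
      (∫ ω, G ω * D ω ∂μ) - (∫ ω, G ω ∂μ) * ∫ ω, D ω ∂μ ≤ 0 := by
  set W : Ω → ℝ := fun ω => max (D' ω - G ω) 0
  have hDW : D = fun ω => W ω + H ω := funext fun ω => by rw [hD ω, ite_le_sub_else_zero_eq_max]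
  have hW0 : ∀ ω, 0 ≤ W ω := fun ω => le_max_right _ _
  have hWD' : ∀ ω, W ω ≤ D' ω := fun ω => max_le (by linarith [hGpos ω]) (hD'pos ω)
  have hGD' : G ⟂ᵢ[μ] D' := hindep.comp measurable_id measurable_fst
  have hWint : Integrable W μ := (hD'int.sub hGint).pos_part
  have hGW : Integrable (fun ω => (G ω - μ[G]) * W ω) μ :=
    (hGD'.comp (measurable_id.sub_const _) measurable_id).integrable_mul_of_abs_le
      (hGint.sub (integrable_const _)) hD'int hWint.1
      fun ω => abs_le_abs_of_nonneg (hW0 ω) (hWD' ω)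
  have hED : ∫ ω, D ω ∂μ = ∫ ω, D' ω ∂μ :=
    IdentDistrib.integral_eq ⟨(hDW ▸ hWint.add hHint : Integrable D μ).aemeasurable,
      hD'int.aemeasurable, hstat⟩
  have hcov : (∫ ω, G ω * D ω ∂μ) - μ[G] * ∫ ω, D ω ∂μ = ∫ ω, (G ω - μ[G]) * W ω ∂μ := by
    rw [hDW]
    exact (hindep.comp measurable_id measurable_snd).integral_mul_add_sub_mul_integral
      hGint hWint hHint hGW
  rw [hcov]
  constructor
  · rw [hED, ← measureReal_def]
    exact hGD'.neg_mul_integral_mul_measureReal_le_integral_sub_mul hGint.aemeasurable hD'int _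
      hGpos hW0 hWD' hGW
  · exact hGD'.integral_sub_integral_mul_nonpos_of_antitone (φ := fun g d => max (d - g) 0)
      hGint hD'int.aemeasurable (fun d _ _ hab => max_le_max (by linarith) le_rfl)
      (by fun_prop) (hD'int.sub (integrable_const _)).pos_part hGW

/-- Covariance bounds in the stationary FCFS GI/GI/1 queue: with `G` independent of
the pair `(D', H)`, `D = 1{G ≤ D'}(D' - G) + H` (Lindley's recursion), and `D`
distributed as `D'`, one has `-E[G]E[D]P(G < E[G]) ≤ Cov(G, D) ≤ 0`. -/
theorem stmt_7 {Ω : Type*} [MeasurableSpace Ω] (μ : Measure Ω) [IsProbabilityMeasure μ]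
    (G D' H : Ω → ℝ) (hG : Measurable G) (hD' : Measurable D') (hH : Measurable H)
    (hGpos : ∀ ω, 0 ≤ G ω) (hD'pos : ∀ ω, 0 ≤ D' ω) (hHpos : ∀ ω, 0 ≤ H ω)
    (hGint : Integrable G μ) (hD'int : Integrable D' μ) (hHint : Integrable H μ)
    (hG2int : Integrable (fun ω => G ω ^ 2) μ)
    (hindep : IndepFun G (fun ω => (D' ω, H ω)) μ)
    (D : Ω → ℝ)
    (hD : ∀ ω, D ω = (if G ω ≤ D' ω then D' ω - G ω else 0) + H ω)
    (hstat : μ.map D = μ.map D') :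
    -((∫ ω, G ω ∂μ) * (∫ ω, D ω ∂μ) * (μ {ω | G ω < ∫ ω, G ω ∂μ}).toReal) ≤
        (∫ ω, G ω * D ω ∂μ) - (∫ ω, G ω ∂μ) * ∫ ω, D ω ∂μ ∧
      (∫ ω, G ω * D ω ∂μ) - (∫ ω, G ω ∂μ) * ∫ ω, D ω ∂μ ≤ 0 :=
  stmt_7_general μ G D' H hGpos hD'pos hGint hD'int hHint hindep D hD hstat
end

section
/- Let G, D′, H be nonnegative integrable random variables on a probability space such that G is independent of the pair (D′, H), E[G²] < ∞, E[G] > 0, and define D = 1{G ≤ D′}(D′ − G) + H. Assume D has the same distribution as D′, with finite mean E[D]. Then E[D]·P(G ≥ E[G]) + E[G²]/(2E[G]) ≤ E[D] + E[G²]/(2E[G]) + Cov(G,D)/E[G] ≤ E[D] + E[G²]/(2E[G]). -/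
/-!
Put `X = (D' - G)⁺`, so that `D = X + H`. As `H` is independent of `G`, the covariance of `G` and
`D` is `E[(G - E G) X]`.

Upper bound: `X` is antitone in `G`, so `(G - E G) X ≤ (G - E G)(D' - E G)⁺` pointwise, and the
right-hand side has mean zero because `G` is independent of `D'`.

Lower bound: since `G ≥ 0` and `0 ≤ X ≤ D'`, pointwise `(G - E G) X ≥ -E G · 1{G < E G} · D'`,
whose mean is `-E G · P(G < E G) · E D'` by independence; stationarity gives `E D' = E D`.
-/

open MeasureTheory ProbabilityTheory

theorem ite_le_sub_zero_eq_max {α : Type*} [AddCommGroup α] [LinearOrder α] [IsOrderedAddMonoid α]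
    (a b : α) : (if a ≤ b then b - a else 0) = max (b - a) 0 := by
  split_ifs with h
  · exact (max_eq_left (sub_nonneg.2 h)).symm
  · exact (max_eq_right (sub_nonpos.2 (not_le.1 h).le)).symm

namespace ProbabilityTheory.IndepFun

variable {Ω : Type*} [MeasurableSpace Ω] {μ : Measure Ω}

theorem integrable_mul_of_abs_le_s8 {G X Y : Ω → ℝ} (hGY : IndepFun G Y μ)
    (hG : Integrable G μ) (hY : Integrable Y μ) (hX : AEStronglyMeasurable X μ)
    (hXY : ∀ ω, |X ω| ≤ |Y ω|) : Integrable (fun ω => G ω * X ω) μ :=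
  (hGY.integrable_mul hG hY).mono (hG.1.mul hX) <| .of_forall fun ω => by
    simpa only [Pi.mul_apply, norm_mul, Real.norm_eq_abs] using
      mul_le_mul_of_nonneg_left (hXY ω) (abs_nonneg (G ω))

theorem integral_mul_add_sub_eq_integral_sub_mul {G X H : Ω → ℝ} (hGH : IndepFun G H μ)
    (hG : Integrable G μ) (hH : Integrable H μ) (hX : Integrable X μ)
    (hGX : Integrable (fun ω => G ω * X ω) μ) :
    ∫ ω, G ω * (X ω + H ω) ∂μ - μ[G] * ∫ ω, X ω + H ω ∂μ = ∫ ω, (G ω - μ[G]) * X ω ∂μ := by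
  have hGH_int : Integrable (fun ω => G ω * H ω) μ := hGH.integrable_mul hG hH
  simp only [mul_add, sub_mul]
  rw [integral_add hGX hGH_int, integral_add hX hH, integral_sub hGX (hX.const_mul _),
    integral_const_mul, hGH.integral_fun_mul_eq_mul_integral hG.1 hH.1]
  ring

variable [IsProbabilityMeasure μ]

theorem integral_sub_integral_mul_eq_zero {G Z : Ω → ℝ} (hGZ : IndepFun G Z μ)
    (hG : Integrable G μ) (hZ : AEStronglyMeasurable Z μ) :
    ∫ ω, (G ω - μ[G]) * Z ω ∂μ = 0 := by
  have hcent : IndepFun (fun ω => G ω - μ[G]) Z μ :=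
    hGZ.comp (measurable_id.sub_const _) measurable_id
  rw [hcent.integral_fun_mul_eq_mul_integral (hG.1.sub aestronglyMeasurable_const) hZ,
    integral_sub hG (integrable_const _), integral_const, probReal_univ, one_smul, sub_self,
    zero_mul]

theorem integral_sub_integral_mul_nonpos_of_antitone_s8 {β : Type*} [MeasurableSpace β]
    {G : Ω → ℝ} {Y : Ω → β} {F : ℝ → β → ℝ} (hGY : IndepFun G Y μ) (hG : Integrable G μ)
    (hF : ∀ y, Antitone (F · y)) (hFm : Measurable (F μ[G]))
    (hFY : Integrable (fun ω => F μ[G] (Y ω)) μ)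
    (hint : Integrable (fun ω => (G ω - μ[G]) * F (G ω) (Y ω)) μ) :
    ∫ ω, (G ω - μ[G]) * F (G ω) (Y ω) ∂μ ≤ 0 := by
  have hGF : IndepFun G (fun ω => F μ[G] (Y ω)) μ := hGY.comp measurable_id hFm
  have hle : ∀ ω, (G ω - μ[G]) * F (G ω) (Y ω) ≤ (G ω - μ[G]) * F μ[G] (Y ω) := by
    intro ω
    rcases le_total (G ω) μ[G] with h | h
    · exact mul_le_mul_of_nonpos_left (hF _ h) (sub_nonpos.2 h)
    · exact mul_le_mul_of_nonneg_left (hF _ h) (sub_nonneg.2 h)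
  calc ∫ ω, (G ω - μ[G]) * F (G ω) (Y ω) ∂μ
      ≤ ∫ ω, (G ω - μ[G]) * F μ[G] (Y ω) ∂μ :=
        integral_mono hint
          ((hGF.comp (measurable_id.sub_const _) measurable_id).integrable_mul
            (hG.sub (integrable_const _)) hFY) hle
    _ = 0 := hGF.integral_sub_integral_mul_eq_zero hG hFY.1

theorem neg_mul_measureReal_lt_mul_integral_le_integral_sub_mul {G X Y : Ω → ℝ} {c : ℝ}
    (hGY : IndepFun G Y μ) (hG : AEMeasurable G μ) (hY : Integrable Y μ) (hc : 0 ≤ c)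
    (hG0 : ∀ ω, 0 ≤ G ω) (hX0 : ∀ ω, 0 ≤ X ω) (hXY : ∀ ω, X ω ≤ Y ω)
    (hint : Integrable (fun ω => (G ω - c) * X ω) μ) :
    -(c * μ.real {ω | G ω < c} * μ[Y]) ≤ ∫ ω, (G ω - c) * X ω ∂μ := by
  set φ : ℝ → ℝ := (Set.Iio c).indicator fun _ => -c
  have hφ : Measurable φ := measurable_const.indicator measurableSet_Iio
  have hφG : IndepFun (fun ω => φ (G ω)) Y μ := hGY.comp hφ measurable_id
  have hs : NullMeasurableSet {ω | G ω < c} μ := hG.nullMeasurableSet_preimage measurableSet_Iio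
  have hφG_eq : (fun ω => φ (G ω)) = {ω | G ω < c}.indicator fun _ => -c :=
    funext fun _ => (Set.indicator_comp_right G).symm
  have hφG_int : Integrable (fun ω => φ (G ω)) μ := hφG_eq ▸ (integrable_const _).indicator₀ hs
  have hE : ∫ ω, φ (G ω) ∂μ = -(c * μ.real {ω | G ω < c}) := by
    rw [hφG_eq, integral_indicator₀ hs, setIntegral_const, smul_eq_mul, mul_neg, mul_comm]
  have hle : ∀ ω, φ (G ω) * Y ω ≤ (G ω - c) * X ω := by
    intro ω
    rcases lt_or_ge (G ω) c with h | h
    · rw [show φ (G ω) = -c from Set.indicator_of_mem h _]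
      nlinarith [hG0 ω, hX0 ω, hXY ω]
    · rw [show φ (G ω) = 0 from Set.indicator_of_notMem (Set.notMem_Iio.2 h) _, zero_mul]
      exact mul_nonneg (sub_nonneg.2 h) (hX0 ω)
  calc -(c * μ.real {ω | G ω < c} * μ[Y]) = ∫ ω, φ (G ω) * Y ω ∂μ := by
        rw [hφG.integral_fun_mul_eq_mul_integral hφG_int.1 hY.1, hE, neg_mul]
    _ ≤ ∫ ω, (G ω - c) * X ω ∂μ := integral_mono (hφG.integrable_mul hφG_int hY) hint hle

theorem integral_sub_integral_mul_max_sub_zero_mem_Icc {G Y : Ω → ℝ} (hGY : IndepFun G Y μ)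
    (hG : Integrable G μ) (hY : Integrable Y μ) (hG0 : ∀ ω, 0 ≤ G ω) (hY0 : ∀ ω, 0 ≤ Y ω) :
    ∫ ω, (G ω - μ[G]) * max (Y ω - G ω) 0 ∂μ ∈
      Set.Icc (-(μ[G] * μ.real {ω | G ω < μ[G]} * μ[Y])) 0 := by
  have hX0 : ∀ ω, 0 ≤ max (Y ω - G ω) 0 := fun ω => le_max_right _ _
  have hXY : ∀ ω, max (Y ω - G ω) 0 ≤ Y ω := fun ω => max_le (by linarith [hG0 ω]) (hY0 ω)
  have hint : Integrable (fun ω => (G ω - μ[G]) * max (Y ω - G ω) 0) μ :=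
    (hGY.comp (measurable_id.sub_const _) measurable_id).integrable_mul_of_abs_le_s8
      (hG.sub (integrable_const _)) hY (hY.sub hG).pos_part.1
      fun ω => abs_le_abs_of_nonneg (hX0 ω) (hXY ω)
  exact ⟨hGY.neg_mul_measureReal_lt_mul_integral_le_integral_sub_mul hG.aemeasurable hY
      (integral_nonneg hG0) hG0 hX0 hXY hint,
    hGY.integral_sub_integral_mul_nonpos_of_antitone_s8 (F := fun g y => max (y - g) 0) hG
      (fun _ _ _ h => by dsimp only; gcongr) (by fun_prop) (hY.sub (integrable_const _)).pos_part
      hint⟩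

end ProbabilityTheory.IndepFun

theorem stmt_8_general {Ω : Type*} [MeasurableSpace Ω] (μ : Measure Ω) [IsProbabilityMeasure μ]
    (G D' H : Ω → ℝ)
    (hGpos : ∀ ω, 0 ≤ G ω) (hD'pos : ∀ ω, 0 ≤ D' ω)
    (hGint : Integrable G μ) (hD'int : Integrable D' μ) (hHint : Integrable H μ)
    (hEGpos : 0 < ∫ ω, G ω ∂μ)
    (hindep : IndepFun G (fun ω => (D' ω, H ω)) μ)
    (D : Ω → ℝ)
    (hD : ∀ ω, D ω = (if G ω ≤ D' ω then D' ω - G ω else 0) + H ω)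
    (hstat : μ.map D = μ.map D') :
    (∫ ω, D ω ∂μ) * (μ {ω | (∫ ω', G ω' ∂μ) ≤ G ω}).toReal +
        (∫ ω, G ω ^ 2 ∂μ) / (2 * ∫ ω, G ω ∂μ) ≤
      (∫ ω, D ω ∂μ) + (∫ ω, G ω ^ 2 ∂μ) / (2 * ∫ ω, G ω ∂μ) +
        ((∫ ω, G ω * D ω ∂μ) - (∫ ω, G ω ∂μ) * ∫ ω, D ω ∂μ) / (∫ ω, G ω ∂μ) ∧
      (∫ ω, D ω ∂μ) + (∫ ω, G ω ^ 2 ∂μ) / (2 * ∫ ω, G ω ∂μ) +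
        ((∫ ω, G ω * D ω ∂μ) - (∫ ω, G ω ∂μ) * ∫ ω, D ω ∂μ) / (∫ ω, G ω ∂μ) ≤
      (∫ ω, D ω ∂μ) + (∫ ω, G ω ^ 2 ∂μ) / (2 * ∫ ω, G ω ∂μ) := by
  set m := ∫ ω, G ω ∂μ
  set X : Ω → ℝ := fun ω => max (D' ω - G ω) 0
  have hDX : D = fun ω => X ω + H ω := funext fun ω => by rw [hD, ite_le_sub_zero_eq_max]
  have hXint : Integrable X μ := (hD'int.sub hGint).pos_part
  have hGD' : IndepFun G D' μ := hindep.comp measurable_id measurable_fst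
  have hGH : IndepFun G H μ := hindep.comp measurable_id measurable_snd
  have hGX : Integrable (fun ω => G ω * X ω) μ :=
    hGD'.integrable_mul_of_abs_le_s8 hGint hD'int hXint.1 fun ω =>
      abs_le_abs_of_nonneg (le_max_right _ _) (max_le (by linarith [hGpos ω]) (hD'pos ω))
  have hED : ∫ ω, D ω ∂μ = ∫ ω, D' ω ∂μ :=
    IdentDistrib.integral_eq ⟨hDX ▸ (hXint.add hHint).aemeasurable, hD'int.aemeasurable, hstat⟩
  have hcov : ∫ ω, G ω * D ω ∂μ - m * ∫ ω, D ω ∂μ = ∫ ω, (G ω - m) * X ω ∂μ := by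
    simpa only [hDX] using hGH.integral_mul_add_sub_eq_integral_sub_mul hGint hHint hXint hGX
  have hP : μ.real {ω | G ω < m} = 1 - (μ {ω | m ≤ G ω}).toReal := by
    have hcompl : {ω | G ω < m} = {ω | m ≤ G ω}ᶜ := by ext; simp
    rw [hcompl, probReal_compl_eq_one_sub₀ (nullMeasurableSet_le
      aemeasurable_const hGint.aemeasurable), measureReal_def]
  obtain ⟨hlower, hupper⟩ :=
    hGD'.integral_sub_integral_mul_max_sub_zero_mem_Icc hGint hD'int hGpos hD'pos
  rw [hP, ← hED] at hlower
  rw [hcov]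
  constructor
  · have hlower_div :
        -((1 - (μ {ω | m ≤ G ω}).toReal) * ∫ ω, D ω ∂μ) ≤ (∫ ω, (G ω - m) * X ω ∂μ) / m := by
      rw [le_div_iff₀ hEGpos]; linarith
    linarith
  · linarith [div_nonpos_of_nonpos_of_nonneg hupper hEGpos.le]

/-- Bounds for the mean AoI in the FCFS GI/GI/1 queue: with `G` independent of the
pair `(D', H)`, `D = 1{G ≤ D'}(D' - G) + H` (Lindley's recursion), and `D`
distributed as `D'`, the mean AoI `E[D] + E[G²]/(2E[G]) + Cov(G,D)/E[G]` satisfies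
`E[D]P(G ≥ E[G]) + E[G²]/(2E[G]) ≤ E[A] ≤ E[D] + E[G²]/(2E[G])`. -/
theorem stmt_8 {Ω : Type*} [MeasurableSpace Ω] (μ : Measure Ω) [IsProbabilityMeasure μ]
    (G D' H : Ω → ℝ) (hG : Measurable G) (hD' : Measurable D') (hH : Measurable H)
    (hGpos : ∀ ω, 0 ≤ G ω) (hD'pos : ∀ ω, 0 ≤ D' ω) (hHpos : ∀ ω, 0 ≤ H ω)
    (hGint : Integrable G μ) (hD'int : Integrable D' μ) (hHint : Integrable H μ)
    (hG2int : Integrable (fun ω => G ω ^ 2) μ)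
    (hEGpos : 0 < ∫ ω, G ω ∂μ)
    (hindep : IndepFun G (fun ω => (D' ω, H ω)) μ)
    (D : Ω → ℝ)
    (hD : ∀ ω, D ω = (if G ω ≤ D' ω then D' ω - G ω else 0) + H ω)
    (hstat : μ.map D = μ.map D') :
    (∫ ω, D ω ∂μ) * (μ {ω | (∫ ω', G ω' ∂μ) ≤ G ω}).toReal +
        (∫ ω, G ω ^ 2 ∂μ) / (2 * ∫ ω, G ω ∂μ) ≤
      (∫ ω, D ω ∂μ) + (∫ ω, G ω ^ 2 ∂μ) / (2 * ∫ ω, G ω ∂μ) +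
        ((∫ ω, G ω * D ω ∂μ) - (∫ ω, G ω ∂μ) * ∫ ω, D ω ∂μ) / (∫ ω, G ω ∂μ) ∧
      (∫ ω, D ω ∂μ) + (∫ ω, G ω ^ 2 ∂μ) / (2 * ∫ ω, G ω ∂μ) +
        ((∫ ω, G ω * D ω ∂μ) - (∫ ω, G ω ∂μ) * ∫ ω, D ω ∂μ) / (∫ ω, G ω ∂μ) ≤
      (∫ ω, D ω ∂μ) + (∫ ω, G ω ^ 2 ∂μ) / (2 * ∫ ω, G ω ∂μ) :=
  stmt_8_general μ G D' H hGpos hD'pos hGint hD'int hHint hEGpos hindep D hD hstat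
end

section
/- Let H be a nonnegative random variable, λ > 0, and let G be exponentially distributed with rate λ, independent of H. Write h*(s) = E[e^{−sH}] and assume 0 < ζ := P(G < H) < 1. Define h_{<G}*(s) = E[e^{−sH} 1{H < G}]/(1−ζ) and g_{<H}*(s) = E[e^{−sG} 1{G < H}]/ζ. Then for every s > 0: h_{<G}*(s) · (λ/(s+λ)) · (1−ζ)/(1 − ζ g_{<H}*(s)) = λ h*(s+λ)/(s + λ h*(s+λ)); moreover, lim_{s→0+} (1 − λ h*(s+λ)/(s + λ h*(s+λ)))/s = 1/(λ h*(λ)). -/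
open MeasureTheory ProbabilityTheory Filter Topology

/-!
Conditioning on `H` (Tonelli plus independence), the exponential clock `G` contributes
`P(G > h) = e^{-λh}` to `(1-ζ) h_{<G}*(s)`, which therefore equals `h*(s+λ)`. For `ζ g_{<H}*(s)`,
tilting `Exp(λ)` by `e^{-sx}` gives `λ/(s+λ) · Exp(s+λ)`, so conditionally on `H = h` the
contribution is `λ/(s+λ) (1 - e^{-(s+λ)h})`, and `ζ g_{<H}*(s) = λ/(s+λ) (1 - h*(s+λ))`. The LST
identity is then algebra, and the mean follows from `(1 - x/(s+x))/s = 1/(s+x)` together with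
continuity of `h*` and `h*(λ) > 0`.

All integrands are nonnegative, so the computations are done with lower Lebesgue integrals,
where Tonelli needs no integrability.
-/

open Real Set
open scoped ENNReal

namespace ProbabilityTheory

theorem IndepFun.lintegral_comp_eq_lintegral_lintegral_map {Ω α β : Type*}
    {mΩ : MeasurableSpace Ω} {mα : MeasurableSpace α} {mβ : MeasurableSpace β}
    {μ : Measure Ω} [IsFiniteMeasure μ] {X : Ω → α} {Y : Ω → β} (hXY : IndepFun X Y μ)
    (hX : Measurable X) (hY : Measurable Y) {f : α × β → ℝ≥0∞} (hf : Measurable f) :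
    ∫⁻ ω, f (X ω, Y ω) ∂μ = ∫⁻ ω, ∫⁻ x, f (x, Y ω) ∂(μ.map X) ∂μ := by
  have hmap := (indepFun_iff_map_prod_eq_prod_map_map hX.aemeasurable hY.aemeasurable).mp hXY
  rw [← lintegral_map hf (hX.prodMk hY), hmap, lintegral_prod_symm' f hf,
    lintegral_map hf.lintegral_prod_left' hY]

lemma exp_neg_mul_le_one {s x : ℝ} (hs : 0 ≤ s) (hx : 0 ≤ x) : exp (-(s * x)) ≤ 1 :=
  exp_le_one_iff.2 (neg_nonpos.2 (mul_nonneg hs hx))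

lemma expMeasure_Iic {r : ℝ} (hr : 0 < r) (x : ℝ) :
    expMeasure r (Iic x) = ENNReal.ofReal (if 0 ≤ x then 1 - exp (-(r * x)) else 0) := by
  rw [← lintegral_exponentialPDF_eq_antiDeriv hr, expMeasure, gammaMeasure,
    withDensity_apply _ measurableSet_Iic]
  rfl

lemma expMeasure_Iio {r : ℝ} (hr : 0 < r) (x : ℝ) :
    expMeasure r (Iio x) = ENNReal.ofReal (if 0 ≤ x then 1 - exp (-(r * x)) else 0) := by
  have : NullSingletonClass (expMeasure r) := nullSingletonClass_withDensity _
  rw [measure_congr Iio_ae_eq_Iic, expMeasure_Iic hr]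

lemma expMeasure_Ioi {r x : ℝ} (hr : 0 < r) (hx : 0 ≤ x) :
    expMeasure r (Ioi x) = ENNReal.ofReal (exp (-(r * x))) := by
  have : IsProbabilityMeasure (expMeasure r) := isProbabilityMeasure_expMeasure hr
  rw [← compl_Iic, prob_compl_eq_one_sub measurableSet_Iic, expMeasure_Iic hr, if_pos hx,
    ← ENNReal.ofReal_one, ← ENNReal.ofReal_sub _ (sub_nonneg.2 (exp_neg_mul_le_one hr.le hx)),
    sub_sub_cancel]

lemma withDensity_expMeasure_exp_neg_mul {r s : ℝ} (hr : 0 < r) (hsr : 0 < s + r) :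
    (expMeasure r).withDensity (fun x => ENNReal.ofReal (exp (-(s * x)))) =
      ENNReal.ofReal (r / (s + r)) • expMeasure (s + r) := by
  have hpdf (r : ℝ) : Measurable (exponentialPDF r) :=
    (measurable_exponentialPDFReal r).ennreal_ofReal
  have hexp (r : ℝ) : expMeasure r = volume.withDensity (exponentialPDF r) := rfl
  rw [hexp, hexp, ← withDensity_mul _ (hpdf r) (by fun_prop), ← withDensity_smul _ (hpdf _)]
  congr 1
  ext x
  simp only [Pi.mul_apply, Pi.smul_apply, smul_eq_mul]
  rcases lt_or_ge x 0 with hx | hx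
  · simp [exponentialPDF_of_neg hx]
  · rw [exponentialPDF_of_nonneg hx, exponentialPDF_of_nonneg hx,
      ← ENNReal.ofReal_mul (by positivity), ← ENNReal.ofReal_mul (by positivity), mul_assoc,
      ← exp_add, ← mul_assoc]
    congr 1
    field_simp
    ring_nf

lemma map_eq_expMeasure {Ω : Type*} {mΩ : MeasurableSpace Ω} {μ : Measure Ω}
    [IsProbabilityMeasure μ] {X : Ω → ℝ} (hX : Measurable X) {r : ℝ} (hr : 0 < r)
    (hcdf : ∀ x, 0 ≤ x → μ {ω | X ω ≤ x} = ENNReal.ofReal (1 - exp (-(r * x)))) :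
    μ.map X = expMeasure r := by
  have : IsProbabilityMeasure (expMeasure r) := isProbabilityMeasure_expMeasure hr
  have : IsProbabilityMeasure (μ.map X) := Measure.isProbabilityMeasure_map hX.aemeasurable
  refine Measure.ext_of_Iic _ _ fun x => ?_
  rw [Measure.map_apply hX measurableSet_Iic, expMeasure_Iic hr]
  split_ifs with hx
  · exact hcdf x hx
  · rw [ENNReal.ofReal_zero]
    refine le_antisymm ?_ zero_le
    calc μ (X ⁻¹' Iic x) ≤ μ {ω | X ω ≤ 0} :=
          measure_mono fun ω (hω : X ω ≤ x) => show X ω ≤ 0 by linarith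
      _ = 0 := by simp [hcdf 0 le_rfl]

section LaplaceTransform

variable {Ω : Type*} {mΩ : MeasurableSpace Ω} {μ : Measure Ω} {G H : Ω → ℝ} {r : ℝ}

lemma integrable_exp_neg_mul [IsFiniteMeasure μ] (hH : Measurable H) (hHpos : ∀ ω, 0 ≤ H ω)
    {s : ℝ} (hs : 0 ≤ s) : Integrable (fun ω => exp (-(s * H ω))) μ :=
  .of_bound (by fun_prop) 1 <| ae_of_all _ fun ω =>
    (norm_of_nonneg (exp_nonneg _)).trans_le (exp_neg_mul_le_one hs (hHpos ω))

lemma continuousOn_integral_exp_neg_mul [IsFiniteMeasure μ] (hH : Measurable H)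
    (hHpos : ∀ ω, 0 ≤ H ω) : ContinuousOn (fun s => ∫ ω, exp (-(s * H ω)) ∂μ) (Ici 0) :=
  continuousOn_of_dominated (fun _ _ => by fun_prop)
    (fun _ hs => ae_of_all _ fun ω =>
      (norm_of_nonneg (exp_nonneg _)).trans_le (exp_neg_mul_le_one hs (hHpos ω)))
    (integrable_const 1) (ae_of_all _ fun _ => by fun_prop)

lemma integral_ite_lt_exp_neg_mul_eq_laplace [IsFiniteMeasure μ] (hG : Measurable G)
    (hH : Measurable H) (hHpos : ∀ ω, 0 ≤ H ω) (hGH : IndepFun G H μ) (hr : 0 < r)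
    (hGmap : μ.map G = expMeasure r) (s : ℝ) :
    ∫ ω, (if H ω < G ω then exp (-(s * H ω)) else 0) ∂μ = ∫ ω, exp (-((s + r) * H ω)) ∂μ := by
  rw [integral_eq_lintegral_of_nonneg_ae (ae_of_all _ fun ω => by positivity)
      (Measurable.ite (measurableSet_lt hH hG) (by fun_prop)
        measurable_const).aestronglyMeasurable,
    integral_eq_lintegral_of_nonneg_ae (ae_of_all _ fun ω => by positivity) (by fun_prop),
    hGH.lintegral_comp_eq_lintegral_lintegral_map hG hH
      (f := fun p => ENNReal.ofReal (if p.2 < p.1 then exp (-(s * p.2)) else 0))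
      (Measurable.ite (measurableSet_lt measurable_snd measurable_fst) (by fun_prop)
        measurable_const).ennreal_ofReal, hGmap]
  congr 1
  refine lintegral_congr fun ω => ?_
  have hind : (fun x => ENNReal.ofReal (if H ω < x then exp (-(s * H ω)) else 0)) =
      (Ioi (H ω)).indicator fun _ => ENNReal.ofReal (exp (-(s * H ω))) := by
    ext x
    simp only [indicator_apply, mem_Ioi]
    split_ifs <;> simp
  rw [hind, lintegral_indicator_const measurableSet_Ioi, expMeasure_Ioi hr (hHpos ω),
    ← ENNReal.ofReal_mul (exp_nonneg _), ← exp_add]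
  ring_nf

lemma integral_ite_lt_exp_neg_mul_eq_one_sub_laplace [IsProbabilityMeasure μ]
    (hG : Measurable G) (hH : Measurable H) (hHpos : ∀ ω, 0 ≤ H ω) (hGH : IndepFun G H μ)
    (hr : 0 < r) (hGmap : μ.map G = expMeasure r) {s : ℝ} (hsr : 0 < s + r) :
    ∫ ω, (if G ω < H ω then exp (-(s * G ω)) else 0) ∂μ =
      r / (s + r) * (1 - ∫ ω, exp (-((s + r) * H ω)) ∂μ) := by
  have hrhs : r / (s + r) * (1 - ∫ ω, exp (-((s + r) * H ω)) ∂μ) =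
      ∫ ω, r / (s + r) * (1 - exp (-((s + r) * H ω))) ∂μ := by
    rw [integral_const_mul, integral_sub (integrable_const 1)
      (integrable_exp_neg_mul hH hHpos hsr.le), integral_const, probReal_univ, one_smul]
  rw [hrhs, integral_eq_lintegral_of_nonneg_ae (ae_of_all _ fun ω => by positivity)
      (Measurable.ite (measurableSet_lt hG hH) (by fun_prop)
        measurable_const).aestronglyMeasurable,
    integral_eq_lintegral_of_nonneg_ae (ae_of_all _ fun ω => mul_nonneg (by positivity)
      (sub_nonneg.2 (exp_neg_mul_le_one hsr.le (hHpos ω)))) (by fun_prop),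
    hGH.lintegral_comp_eq_lintegral_lintegral_map hG hH
      (f := fun p => ENNReal.ofReal (if p.1 < p.2 then exp (-(s * p.1)) else 0))
      (Measurable.ite (measurableSet_lt measurable_fst measurable_snd) (by fun_prop)
        measurable_const).ennreal_ofReal, hGmap]
  congr 1
  refine lintegral_congr fun ω => ?_
  have hind : (fun x => ENNReal.ofReal (if x < H ω then exp (-(s * x)) else 0)) =
      (Iio (H ω)).indicator fun x => ENNReal.ofReal (exp (-(s * x))) := by
    ext x
    simp only [indicator_apply, mem_Iio]
    split_ifs <;> simp
  rw [hind, lintegral_indicator measurableSet_Iio, ← withDensity_apply _ measurableSet_Iio,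
    withDensity_expMeasure_exp_neg_mul hr hsr, Measure.smul_apply, expMeasure_Iio hsr,
    if_pos (hHpos ω), smul_eq_mul, ← ENNReal.ofReal_mul (by positivity)]

end LaplaceTransform

end ProbabilityTheory

lemma tendsto_one_sub_div_add_div {a : ℝ → ℝ} {a₀ : ℝ} (ha : Tendsto a (𝓝[≠] 0) (𝓝 a₀))
    (ha₀ : a₀ ≠ 0) :
    Tendsto (fun s => (1 - a s / (s + a s)) / s) (𝓝[≠] 0) (𝓝 (1 / a₀)) := by
  have hden : Tendsto (fun s => s + a s) (𝓝[≠] 0) (𝓝 a₀) := by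
    simpa using (tendsto_id.mono_left nhdsWithin_le_nhds).add ha
  refine (tendsto_const_nhds.div hden ha₀).congr' ?_
  filter_upwards [self_mem_nhdsWithin, hden.eventually_ne ha₀] with s (hs : s ≠ 0) hsa
  rw [Pi.div_apply]
  field_simp
  ring

theorem stmt_10_general {Ω : Type*} [MeasurableSpace Ω] (μ : Measure Ω) [IsProbabilityMeasure μ]
    (G H : Ω → ℝ) (hG : Measurable G) (hH : Measurable H)
    (hHpos : ∀ ω, 0 ≤ H ω)
    (lam : ℝ) (hlam : 0 < lam)
    (hGexp : ∀ x : ℝ, 0 ≤ x →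
      μ {ω | G ω ≤ x} = ENNReal.ofReal (1 - Real.exp (-(lam * x))))
    (hindep : IndepFun G H μ)
    (hstar : ℝ → ℝ) (hhstar : ∀ s : ℝ, hstar s = ∫ ω, Real.exp (-(s * H ω)) ∂μ)
    (zeta : ℝ)
    (hzeta0 : 0 < zeta) (hzeta1 : zeta < 1)
    (hlt glt : ℝ → ℝ)
    (hhlt : ∀ s : ℝ,
      hlt s = (∫ ω, (if H ω < G ω then Real.exp (-(s * H ω)) else 0) ∂μ) / (1 - zeta))
    (hglt : ∀ s : ℝ,
      glt s = (∫ ω, (if G ω < H ω then Real.exp (-(s * G ω)) else 0) ∂μ) / zeta) :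
    (∀ s : ℝ, 0 < s →
      hlt s * (lam / (s + lam)) * ((1 - zeta) / (1 - zeta * glt s)) =
        lam * hstar (s + lam) / (s + lam * hstar (s + lam))) ∧
      Tendsto (fun s : ℝ =>
          (1 - lam * hstar (s + lam) / (s + lam * hstar (s + lam))) / s)
        (𝓝[>] 0) (𝓝 (1 / (lam * hstar lam))) := by
  have hGmap := map_eq_expMeasure hG hlam hGexp
  refine ⟨fun s hs => ?_, ?_⟩
  · have hsl : 0 < s + lam := by linarith
    have hstar_nonneg : 0 ≤ hstar (s + lam) := hhstar _ ▸ integral_nonneg fun _ => exp_nonneg _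
    have hden : 1 - zeta * glt s = (s + lam * hstar (s + lam)) / (s + lam) := by
      rw [hglt, mul_div_cancel₀ _ hzeta0.ne', integral_ite_lt_exp_neg_mul_eq_one_sub_laplace hG
        hH hHpos hindep hlam hGmap hsl, ← hhstar]
      field_simp
      ring
    have hden_pos : 0 < s + lam * hstar (s + lam) := by positivity
    have hzeta1' : 1 - zeta ≠ 0 := by linarith
    rw [hden, hhlt, integral_ite_lt_exp_neg_mul_eq_laplace hG hH hHpos hindep hlam hGmap,
      ← hhstar]
    field_simp
  · have hpos : 0 < hstar lam :=
      hhstar lam ▸ integral_exp_pos (integrable_exp_neg_mul hH hHpos hlam.le)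
    have hcont : ContinuousAt hstar lam := by
      rw [funext hhstar]
      exact (continuousOn_integral_exp_neg_mul hH hHpos).continuousAt (Ici_mem_nhds hlam)
    have hshift : Tendsto (fun s => lam * hstar (s + lam)) (𝓝[≠] 0) (𝓝 (lam * hstar lam)) := by
      refine ((hcont.tendsto.comp ?_).const_mul lam).mono_left nhdsWithin_le_nhds
      simpa using (tendsto_id (x := 𝓝 (0 : ℝ))).add_const lam
    exact (tendsto_one_sub_div_add_div hshift (by positivity)).mono_left (nhdsGT_le_nhdsNE 0)

/-- AoI in the preemptive LCFS M/GI/1 queue: with `G` exponential with rate `λ`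
independent of the service time `H`, `ζ = P(G < H) ∈ (0,1)`, for every `s > 0` the
AoI LST satisfies
`h_{<G}*(s) (λ/(s+λ)) (1-ζ)/(1-ζ g_{<H}*(s)) = λ h*(s+λ)/(s + λ h*(s+λ))`,
and the mean AoI is `lim_{s→0+} (1 - λ h*(s+λ)/(s + λ h*(s+λ)))/s = 1/(λ h*(λ))`. -/
theorem stmt_10 {Ω : Type*} [MeasurableSpace Ω] (μ : Measure Ω) [IsProbabilityMeasure μ]
    (G H : Ω → ℝ) (hG : Measurable G) (hH : Measurable H)
    (hGpos : ∀ ω, 0 ≤ G ω) (hHpos : ∀ ω, 0 ≤ H ω)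
    (lam : ℝ) (hlam : 0 < lam)
    (hGexp : ∀ x : ℝ, 0 ≤ x →
      μ {ω | G ω ≤ x} = ENNReal.ofReal (1 - Real.exp (-(lam * x))))
    (hindep : IndepFun G H μ)
    (hstar : ℝ → ℝ) (hhstar : ∀ s : ℝ, hstar s = ∫ ω, Real.exp (-(s * H ω)) ∂μ)
    (zeta : ℝ) (hzeta : zeta = (μ {ω | G ω < H ω}).toReal)
    (hzeta0 : 0 < zeta) (hzeta1 : zeta < 1)
    (hlt glt : ℝ → ℝ)
    (hhlt : ∀ s : ℝ,
      hlt s = (∫ ω, (if H ω < G ω then Real.exp (-(s * H ω)) else 0) ∂μ) / (1 - zeta))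
    (hglt : ∀ s : ℝ,
      glt s = (∫ ω, (if G ω < H ω then Real.exp (-(s * G ω)) else 0) ∂μ) / zeta) :
    (∀ s : ℝ, 0 < s →
      hlt s * (lam / (s + lam)) * ((1 - zeta) / (1 - zeta * glt s)) =
        lam * hstar (s + lam) / (s + lam * hstar (s + lam))) ∧
      Tendsto (fun s : ℝ =>
          (1 - lam * hstar (s + lam) / (s + lam * hstar (s + lam))) / s)
        (𝓝[>] 0) (𝓝 (1 / (lam * hstar lam))) :=
  stmt_10_general μ G H hG hH hHpos lam hlam hGexp hindep hstar hhstar zeta hzeta0 hzeta1 hlt glt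
    hhlt hglt
end

section
/- Let G¹ and G² be nonnegative random variables with the same finite positive mean m = E[G¹] = E[G²] > 0, such that E[φ(G¹)] ≤ E[φ(G²)] for every convex function φ : ℝ → ℝ for which both expectations exist (convex order). For i = 1,2 let G̃ⁱ be a random variable whose law on [0,∞) has density x ↦ P(Gⁱ > x)/m with respect to Lebesgue measure (the stationary residual distribution of Gⁱ), and let H be a nonnegative random variable independent of G̃ⁱ. Then G̃¹ + H is smaller than G̃² + H in the usual stochastic order: for every x ≥ 0, P(G̃¹ + H > x) ≤ P(G̃² + H > x). -/
/-!
By the layer-cake formula, `∫_y^∞ P(G > t) dt = E[(G - y)⁺]`, and `z ↦ (z - y)⁺` is convex, so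
the convex order `G₁ ≤_cx G₂` makes every tail `P(T₁ > y)` of the residual law at most
`P(T₂ > y)`, i.e. `T₁ ≤_st T₂`. Conditioning on the independent summand `H`,
`P(T + H > x) = E[P(T > x - H)]`, so the stochastic order survives adding `H`.
-/

open MeasureTheory ProbabilityTheory Set

section StopLoss

variable {Ω : Type*} [MeasurableSpace Ω] {μ : Measure Ω}

theorem lintegral_Ioi_measure_lt_eq_lintegral_ofReal_sub {G : Ω → ℝ} (hG : AEMeasurable G μ)
    (y : ℝ) : ∫⁻ t in Ioi y, μ {ω | t < G ω} = ∫⁻ ω, ENNReal.ofReal (G ω - y) ∂μ := by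
  have hshift : ∫⁻ t in Ioi y, μ {ω | t < G ω} = ∫⁻ s in Ioi 0, μ {ω | s + y < G ω} := by
    rw [← (measurePreserving_add_right volume y).setLIntegral_comp_preimage_emb
      (measurableEmbedding_addRight y)]
    simp
  have hposPart (ω : Ω) : ENNReal.ofReal (G ω - y) = ENNReal.ofReal (max (G ω - y) 0) := by
    simp
  rw [hshift, lintegral_congr hposPart, lintegral_eq_lintegral_meas_lt μ
    (f := fun ω => max (G ω - y) 0) (ae_of_all _ fun _ => le_max_right _ _) (by fun_prop)]
  refine setLIntegral_congr_fun measurableSet_Ioi fun s (hs : 0 < s) => ?_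
  simp only [lt_max_iff, hs.not_gt, or_false, lt_sub_iff_add_lt]

theorem lintegral_Ioi_measure_lt_le_of_convexOrder [IsFiniteMeasure μ] {G₁ G₂ : Ω → ℝ}
    (hG₁ : Integrable G₁ μ) (hG₂ : Integrable G₂ μ)
    (hcx : ∀ φ : ℝ → ℝ, ConvexOn ℝ univ φ → Integrable (fun ω => φ (G₁ ω)) μ →
      Integrable (fun ω => φ (G₂ ω)) μ → ∫ ω, φ (G₁ ω) ∂μ ≤ ∫ ω, φ (G₂ ω) ∂μ) (y : ℝ) :
    ∫⁻ t in Ioi y, μ {ω | t < G₁ ω} ≤ ∫⁻ t in Ioi y, μ {ω | t < G₂ ω} := by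
  have hconv : ConvexOn ℝ univ fun z : ℝ => max (z - y) 0 :=
    ((convexOn_id convex_univ).sub (concaveOn_const y convex_univ)).sup
      (convexOn_const 0 convex_univ)
  have hint {G : Ω → ℝ} (hG : Integrable G μ) : Integrable (fun ω => max (G ω - y) 0) μ :=
    (hG.sub (integrable_const y)).pos_part
  have hstopLoss {G : Ω → ℝ} (hG : Integrable G μ) :
      ∫⁻ t in Ioi y, μ {ω | t < G ω} = ENNReal.ofReal (∫ ω, max (G ω - y) 0 ∂μ) := by
    rw [lintegral_Ioi_measure_lt_eq_lintegral_ofReal_sub hG.aemeasurable,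
      ofReal_integral_eq_lintegral_ofReal (hint hG) (ae_of_all _ fun _ => le_max_right _ _)]
    simp
  rw [hstopLoss hG₁, hstopLoss hG₂]
  exact ENNReal.ofReal_le_ofReal (hcx _ hconv (hint hG₁) (hint hG₂))

end StopLoss

section ResidualLaw

variable {Ω : Type*} [MeasurableSpace Ω]

noncomputable def residualLaw (μ : Measure Ω) (G : Ω → ℝ) (m : ℝ) : Measure ℝ :=
  (volume : Measure ℝ).withDensity
    (fun x => if 0 ≤ x then ENNReal.ofReal ((μ {ω | x < G ω}).toReal / m) else 0)

theorem residualLaw_Ioi (μ : Measure Ω) [IsFiniteMeasure μ] (G : Ω → ℝ) {m : ℝ} (hm : 0 < m)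
    (x : ℝ) : residualLaw μ G m (Ioi x)
      = (ENNReal.ofReal m)⁻¹ * ∫⁻ t in Ioi (max x 0), μ {ω | t < G ω} := by
  have hdensity : (fun t : ℝ => if 0 ≤ t then ENNReal.ofReal ((μ {ω | t < G ω}).toReal / m)
      else 0) = (Ici 0).indicator fun t => (ENNReal.ofReal m)⁻¹ * μ {ω | t < G ω} := by
    ext t
    simp only [indicator, mem_Ici, ENNReal.ofReal_div_of_pos hm,
      ENNReal.ofReal_toReal (measure_ne_top μ _), ENNReal.div_eq_inv_mul]
  have hdomain : (Ici 0 ∩ Ioi x : Set ℝ) =ᵐ[volume] Ioi (max x 0) := by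
    rw [max_comm, ← Ioi_inter_Ioi]
    exact Ioi_ae_eq_Ici.symm.inter Filter.EventuallyEq.rfl
  rw [residualLaw, withDensity_apply _ measurableSet_Ioi, hdensity,
    lintegral_indicator measurableSet_Ici, Measure.restrict_restrict measurableSet_Ici,
    setLIntegral_congr hdomain, lintegral_const_mul' _ _ (by simp [hm])]

end ResidualLaw

section IndependentSum

variable {Ω : Type*} [MeasurableSpace Ω] {μ : Measure Ω} [IsFiniteMeasure μ]

theorem measure_lt_add_eq_lintegral_of_indepFun {T H : Ω → ℝ} (hT : Measurable T)
    (hH : Measurable H) (hTH : IndepFun T H μ) (x : ℝ) :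
    μ {ω | x < T ω + H ω} = ∫⁻ h, μ.map T (Ioi (x - h)) ∂μ.map H := by
  have hS : MeasurableSet {p : ℝ × ℝ | x < p.1 + p.2} := by measurability
  rw [show {ω | x < T ω + H ω} = (fun ω => (T ω, H ω)) ⁻¹' {p | x < p.1 + p.2} from rfl,
    ← Measure.map_apply (hT.prodMk hH) hS,
    (indepFun_iff_map_prod_eq_prod_map_map hT.aemeasurable hH.aemeasurable).mp hTH,
    Measure.prod_apply_symm hS]
  refine lintegral_congr fun h => congr_arg _ (ext fun t => ?_)
  simp [sub_lt_iff_lt_add]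

theorem measure_lt_add_le_of_indepFun {T₁ T₂ H : Ω → ℝ} (hT₁ : Measurable T₁)
    (hT₂ : Measurable T₂) (hH : Measurable H) (hT₁H : IndepFun T₁ H μ)
    (hT₂H : IndepFun T₂ H μ) (hle : ∀ y, μ.map T₁ (Ioi y) ≤ μ.map T₂ (Ioi y)) (x : ℝ) :
    μ {ω | x < T₁ ω + H ω} ≤ μ {ω | x < T₂ ω + H ω} := by
  rw [measure_lt_add_eq_lintegral_of_indepFun hT₁ hH hT₁H,
    measure_lt_add_eq_lintegral_of_indepFun hT₂ hH hT₂H]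
  exact lintegral_mono fun h => hle (x - h)

end IndependentSum

theorem stmt_13_general {Ω Ω' : Type*} [MeasurableSpace Ω] [MeasurableSpace Ω']
    (μ : Measure Ω) (μ' : Measure Ω')
    [IsProbabilityMeasure μ] [IsProbabilityMeasure μ']
    (G₁ G₂ : Ω → ℝ)
    (hG₁int : Integrable G₁ μ) (hG₂int : Integrable G₂ μ)
    (m : ℝ) (hm : 0 < m)
    (hcx : ∀ φ : ℝ → ℝ, ConvexOn ℝ Set.univ φ →
      Integrable (fun ω => φ (G₁ ω)) μ → Integrable (fun ω => φ (G₂ ω)) μ →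
        ∫ ω, φ (G₁ ω) ∂μ ≤ ∫ ω, φ (G₂ ω) ∂μ)
    (T₁ T₂ H : Ω' → ℝ) (hT₁ : Measurable T₁) (hT₂ : Measurable T₂) (hH : Measurable H)
    (hlaw₁ : μ'.map T₁ = (volume : Measure ℝ).withDensity
      (fun x => if 0 ≤ x then ENNReal.ofReal ((μ {ω | x < G₁ ω}).toReal / m) else 0))
    (hlaw₂ : μ'.map T₂ = (volume : Measure ℝ).withDensity
      (fun x => if 0 ≤ x then ENNReal.ofReal ((μ {ω | x < G₂ ω}).toReal / m) else 0))
    (hindep₁ : IndepFun T₁ H μ') (hindep₂ : IndepFun T₂ H μ') :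
    ∀ x : ℝ, 0 ≤ x →
      μ' {ω | x < T₁ ω + H ω} ≤ μ' {ω | x < T₂ ω + H ω} := by
  intro x _
  refine measure_lt_add_le_of_indepFun hT₁ hT₂ hH hindep₁ hindep₂ (fun y => ?_) x
  have hres₁ : μ'.map T₁ = residualLaw μ G₁ m := hlaw₁
  have hres₂ : μ'.map T₂ = residualLaw μ G₂ m := hlaw₂
  rw [hres₁, hres₂, residualLaw_Ioi μ G₁ hm, residualLaw_Ioi μ G₂ hm]
  exact mul_le_mul_right (lintegral_Ioi_measure_lt_le_of_convexOrder hG₁int hG₂int hcx _) _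

/-- Stochastic-order comparison of the AoI in preemptive LCFS GI/M/1 queues: if the
interarrival times satisfy `G¹ ≤_cx G²` (same finite positive mean `m`, and
`E[φ(G¹)] ≤ E[φ(G²)]` for all convex `φ` with both expectations existing), `T i` has
the stationary residual distribution of `G i` (density `x ↦ P(G i > x)/m` on
`[0,∞)`), and `H` is a nonnegative random variable independent of each `T i`, then
`T 1 + H ≤_st T 2 + H`: for all `x ≥ 0`, `P(T 1 + H > x) ≤ P(T 2 + H > x)`. -/
theorem stmt_13 {Ω Ω' : Type*} [MeasurableSpace Ω] [MeasurableSpace Ω']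
    (μ : Measure Ω) (μ' : Measure Ω')
    [IsProbabilityMeasure μ] [IsProbabilityMeasure μ']
    (G₁ G₂ : Ω → ℝ) (hG₁ : Measurable G₁) (hG₂ : Measurable G₂)
    (hG₁pos : ∀ ω, 0 ≤ G₁ ω) (hG₂pos : ∀ ω, 0 ≤ G₂ ω)
    (hG₁int : Integrable G₁ μ) (hG₂int : Integrable G₂ μ)
    (m : ℝ) (hm : 0 < m) (hmean₁ : m = ∫ ω, G₁ ω ∂μ) (hmean₂ : m = ∫ ω, G₂ ω ∂μ)
    (hcx : ∀ φ : ℝ → ℝ, ConvexOn ℝ Set.univ φ →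
      Integrable (fun ω => φ (G₁ ω)) μ → Integrable (fun ω => φ (G₂ ω)) μ →
        ∫ ω, φ (G₁ ω) ∂μ ≤ ∫ ω, φ (G₂ ω) ∂μ)
    (T₁ T₂ H : Ω' → ℝ) (hT₁ : Measurable T₁) (hT₂ : Measurable T₂) (hH : Measurable H)
    (hHpos : ∀ ω, 0 ≤ H ω)
    (hlaw₁ : μ'.map T₁ = (volume : Measure ℝ).withDensity
      (fun x => if 0 ≤ x then ENNReal.ofReal ((μ {ω | x < G₁ ω}).toReal / m) else 0))
    (hlaw₂ : μ'.map T₂ = (volume : Measure ℝ).withDensity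
      (fun x => if 0 ≤ x then ENNReal.ofReal ((μ {ω | x < G₂ ω}).toReal / m) else 0))
    (hindep₁ : IndepFun T₁ H μ') (hindep₂ : IndepFun T₂ H μ') :
    ∀ x : ℝ, 0 ≤ x →
      μ' {ω | x < T₁ ω + H ω} ≤ μ' {ω | x < T₂ ω + H ω} :=
  stmt_13_general μ μ' G₁ G₂ hG₁int hG₂int m hm hcx T₁ T₂ H hT₁ hT₂ hH hlaw₁ hlaw₂ hindep₁ hindep₂
end

section
/- Let H be a nonnegative random variable with a bounded continuous probability density function h on [0,∞), and write F(τ) = P(H ≤ τ) = ∫_0^τ h(x) dx; assume F(τ) > 0 for all τ > 0. Then as τ → 0+, the quantity E[H · 1{H ≤ τ}]/F(τ) + τ/2 + τ(1 − F(τ))/F(τ) converges to 1/h(0) if h(0) > 0, and diverges to +∞ if h(0) = 0. -/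
/-!
Write `E τ = E[H·1{H ≤ τ}]`. Since `0 ≤ E τ ≤ τ F(τ)`, the first two terms lie in `[0, 2τ]`, so
everything is decided by `τ(1 - F(τ))/F(τ)`. By the
fundamental theorem of calculus `F(τ)/τ → h(0)`, so `F(τ) → 0` and `τ/F(τ)` tends to `1/h(0)`, or to
`+∞` when `h(0) = 0`.
-/

open MeasureTheory Filter Topology Set

theorem tendsto_intervalIntegral_div_sub_nhdsGT {h : ℝ → ℝ} {a : ℝ}
    (hcont : ContinuousOn h (Ici a)) :
    Tendsto (fun t => (∫ x in a..t, h x) / (t - a)) (𝓝[>] a) (𝓝 (h a)) := by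
  have hderiv : HasDerivWithinAt (fun t => ∫ x in a..t, h x) (h a) (Ici a) a :=
    intervalIntegral.integral_hasDerivWithinAt_right (by simp)
      ⟨Ici a, mem_of_superset self_mem_nhdsWithin Ioi_subset_Ici_self,
        hcont.aestronglyMeasurable measurableSet_Ici⟩
      ((hcont a self_mem_Ici).mono Ioi_subset_Ici_self)
  have hslope := hasDerivWithinAt_iff_tendsto_slope.mp hderiv
  rw [Ici_sdiff_left] at hslope
  refine hslope.congr fun t => ?_
  simp [slope_def_field]

theorem integral_ite_le_mul_measureReal {Ω : Type*} [MeasurableSpace Ω] {μ : Measure Ω}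
    [IsFiniteMeasure μ] {H : Ω → ℝ} (hH : Measurable H) (hHpos : ∀ ω, 0 ≤ H ω) (τ : ℝ) :
    ∫ ω, (if H ω ≤ τ then H ω else 0) ∂μ ≤ τ * μ.real {ω | H ω ≤ τ} := by
  have hs : MeasurableSet {ω | H ω ≤ τ} := hH measurableSet_Iic
  calc ∫ ω, (if H ω ≤ τ then H ω else 0) ∂μ
      ≤ ∫ ω, {ω | H ω ≤ τ}.indicator (fun _ => τ) ω ∂μ := by
        refine integral_mono_of_nonneg (.of_forall fun ω => ?_)
          ((integrable_const τ).indicator hs) (.of_forall fun ω => ?_)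
        · dsimp only; split_ifs <;> simp [hHpos ω]
        · by_cases hω : H ω ≤ τ <;> simp [hω]
    _ = τ * μ.real {ω | H ω ≤ τ} := by
        rw [integral_indicator_const _ hs, smul_eq_mul, mul_comm]

/-- The mean AoI of the preemptive LCFS D/GI/1 queue with interarrival time `τ`, where
`F` is the service-time distribution function and `E τ = E[H·1{H ≤ τ}]`. -/
noncomputable def lcfsMeanAoI (E F : ℝ → ℝ) (τ : ℝ) : ℝ :=
  E τ / F τ + τ / 2 + τ * (1 - F τ) / F τ

section LimitAtZero

variable {E F : ℝ → ℝ} {c : ℝ}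

theorem tendsto_nhdsGT_zero_of_tendsto_div_self
    (hslope : Tendsto (fun τ => F τ / τ) (𝓝[>] 0) (𝓝 c)) : Tendsto F (𝓝[>] 0) (𝓝 0) := by
  have hprod : Tendsto (fun τ => F τ / τ * τ) (𝓝[>] 0) (𝓝 (c * 0)) :=
    hslope.mul (tendsto_id.mono_left nhdsWithin_le_nhds)
  rw [mul_zero] at hprod
  refine hprod.congr' ?_
  filter_upwards [self_mem_nhdsWithin] with τ (hτ : 0 < τ)
  field_simp

theorem tendsto_div_nhdsGT_zero_of_le_mul (hFpos : ∀ τ, 0 < τ → 0 < F τ)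
    (hE0 : ∀ τ, 0 < τ → 0 ≤ E τ) (hEF : ∀ τ, 0 < τ → E τ ≤ τ * F τ) :
    Tendsto (fun τ => E τ / F τ) (𝓝[>] 0) (𝓝 0) := by
  refine tendsto_of_tendsto_of_tendsto_of_le_of_le' tendsto_const_nhds
    (tendsto_id.mono_left nhdsWithin_le_nhds) ?_ ?_
  all_goals filter_upwards [self_mem_nhdsWithin] with τ (hτ : 0 < τ)
  · exact div_nonneg (hE0 τ hτ) (hFpos τ hτ).le
  · exact (div_le_iff₀ (hFpos τ hτ)).mpr (hEF τ hτ)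

variable (hslope : Tendsto (fun τ => F τ / τ) (𝓝[>] 0) (𝓝 c))
  (hFpos : ∀ τ, 0 < τ → 0 < F τ) (hE0 : ∀ τ, 0 < τ → 0 ≤ E τ)
include hslope hFpos hE0

theorem tendsto_lcfsMeanAoI_of_pos (hEF : ∀ τ, 0 < τ → E τ ≤ τ * F τ) (hc : 0 < c) :
    Tendsto (lcfsMeanAoI E F) (𝓝[>] 0) (𝓝 (1 / c)) := by
  unfold lcfsMeanAoI
  have hinv : Tendsto (fun τ => τ / F τ) (𝓝[>] 0) (𝓝 c⁻¹) :=
    (hslope.inv₀ hc.ne').congr fun τ => inv_div _ _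
  have hlast : Tendsto (fun τ => τ * (1 - F τ) / F τ) (𝓝[>] 0) (𝓝 (c⁻¹ * (1 - 0))) :=
    (hinv.mul (tendsto_const_nhds.sub (tendsto_nhdsGT_zero_of_tendsto_div_self hslope))).congr
      fun τ => by ring
  have hhalf : Tendsto (fun τ : ℝ => τ / 2) (𝓝[>] 0) (𝓝 (0 / 2)) :=
    (tendsto_id.mono_left nhdsWithin_le_nhds).div_const 2
  simpa [one_div] using
    ((tendsto_div_nhdsGT_zero_of_le_mul hFpos hE0 hEF).add hhalf).add hlast

theorem tendsto_lcfsMeanAoI_atTop (hc : c = 0) :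
    Tendsto (lcfsMeanAoI E F) (𝓝[>] 0) atTop := by
  subst hc
  unfold lcfsMeanAoI
  have hF1 : Tendsto (fun τ => 1 - F τ) (𝓝[>] 0) (𝓝 1) := by
    simpa using tendsto_const_nhds.sub (tendsto_nhdsGT_zero_of_tendsto_div_self hslope)
  have hslope' : Tendsto (fun τ => F τ / τ) (𝓝[>] 0) (𝓝[>] 0) := by
    refine tendsto_nhdsWithin_iff.mpr ⟨hslope, ?_⟩
    filter_upwards [self_mem_nhdsWithin] with τ (hτ : 0 < τ)
    exact div_pos (hFpos τ hτ) hτ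
  have hinv : Tendsto (fun τ => τ / F τ) (𝓝[>] 0) atTop :=
    hslope'.inv_tendsto_nhdsGT_zero.congr fun τ => by simp [inv_div]
  have hlast : Tendsto (fun τ => τ * (1 - F τ) / F τ) (𝓝[>] 0) atTop :=
    (hinv.atTop_mul_pos one_pos hF1).congr fun τ => by ring
  refine tendsto_atTop_mono' _ ?_ hlast
  filter_upwards [self_mem_nhdsWithin] with τ (hτ : 0 < τ)
  have : 0 ≤ E τ / F τ := div_nonneg (hE0 τ hτ) (hFpos τ hτ).le
  linarith

end LimitAtZero

theorem stmt_15_general {Ω : Type*} [MeasurableSpace Ω] (μ : Measure Ω) [IsProbabilityMeasure μ]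
    (H : Ω → ℝ) (hH : Measurable H) (hHpos : ∀ ω, 0 ≤ H ω)
    (h : ℝ → ℝ)
    (hcont : ContinuousOn h (Set.Ici 0))
    (F : ℝ → ℝ) (hFdef : ∀ τ : ℝ, F τ = (μ {ω | H ω ≤ τ}).toReal)
    (hFh : ∀ τ : ℝ, 0 ≤ τ → F τ = ∫ x in (0 : ℝ)..τ, h x)
    (hFpos : ∀ τ : ℝ, 0 < τ → 0 < F τ) :
    (0 < h 0 →
      Tendsto (fun τ : ℝ =>
          (∫ ω, (if H ω ≤ τ then H ω else 0) ∂μ) / F τ + τ / 2 + τ * (1 - F τ) / F τ)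
        (𝓝[>] 0) (𝓝 (1 / h 0))) ∧
      (h 0 = 0 →
        Tendsto (fun τ : ℝ =>
            (∫ ω, (if H ω ≤ τ then H ω else 0) ∂μ) / F τ + τ / 2 + τ * (1 - F τ) / F τ)
          (𝓝[>] 0) atTop) := by
  have hslope : Tendsto (fun τ => F τ / τ) (𝓝[>] 0) (𝓝 (h 0)) := by
    refine (tendsto_intervalIntegral_div_sub_nhdsGT hcont).congr' ?_
    filter_upwards [self_mem_nhdsWithin] with τ (hτ : 0 < τ)
    rw [hFh τ hτ.le, sub_zero]
  have hE0 : ∀ τ : ℝ, 0 < τ → 0 ≤ ∫ ω, (if H ω ≤ τ then H ω else 0) ∂μ := fun τ _ =>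
    integral_nonneg fun ω => by split_ifs <;> simp [hHpos ω]
  have hEF : ∀ τ : ℝ, 0 < τ → ∫ ω, (if H ω ≤ τ then H ω else 0) ∂μ ≤ τ * F τ := fun τ hτ => by
    simpa [hFdef τ, Measure.real] using integral_ite_le_mul_measureReal (μ := μ) hH hHpos τ
  exact ⟨fun hc => tendsto_lcfsMeanAoI_of_pos hslope hFpos hE0 hEF hc,
    fun hc => tendsto_lcfsMeanAoI_atTop hslope hFpos hE0 hc⟩

/-- Heavy-traffic limit of the mean AoI in the preemptive LCFS D/GI/1 queue: if the
service time `H` has a bounded continuous density `h` on `[0,∞)`, with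
`F(τ) = P(H ≤ τ) = ∫_0^τ h(x) dx > 0` for `τ > 0`, then as `τ → 0+` the mean AoI
`E[H·1{H ≤ τ}]/F(τ) + τ/2 + τ(1-F(τ))/F(τ)` tends to `1/h(0)` if `h(0) > 0`, and
diverges to `+∞` if `h(0) = 0`. -/
theorem stmt_15 {Ω : Type*} [MeasurableSpace Ω] (μ : Measure Ω) [IsProbabilityMeasure μ]
    (H : Ω → ℝ) (hH : Measurable H) (hHpos : ∀ ω, 0 ≤ H ω)
    (hHint : Integrable H μ)
    (h : ℝ → ℝ)
    (hcont : ContinuousOn h (Set.Ici 0))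
    (hpos : ∀ x : ℝ, 0 ≤ x → 0 ≤ h x)
    (hbdd : ∃ C : ℝ, ∀ x : ℝ, 0 ≤ x → h x ≤ C)
    (F : ℝ → ℝ) (hFdef : ∀ τ : ℝ, F τ = (μ {ω | H ω ≤ τ}).toReal)
    (hFh : ∀ τ : ℝ, 0 ≤ τ → F τ = ∫ x in (0 : ℝ)..τ, h x)
    (hFpos : ∀ τ : ℝ, 0 < τ → 0 < F τ) :
    (0 < h 0 →
      Tendsto (fun τ : ℝ =>
          (∫ ω, (if H ω ≤ τ then H ω else 0) ∂μ) / F τ + τ / 2 + τ * (1 - F τ) / F τ)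
        (𝓝[>] 0) (𝓝 (1 / h 0))) ∧
      (h 0 = 0 →
        Tendsto (fun τ : ℝ =>
            (∫ ω, (if H ω ≤ τ then H ω else 0) ∂μ) / F τ + τ / 2 + τ * (1 - F τ) / F τ)
          (𝓝[>] 0) atTop) :=
  stmt_15_general μ H hH hHpos h hcont F hFdef hFh hFpos
end

section
/- Let H be a nonnegative random variable with E[H] > 0 and E[H²] < ∞, let λ > 0 with ρ = λE[H] < 1, and write h*(λ) = E[e^{−λH}] and h¹ = E[H e^{−λH}]. Define A_NPW = (1/(ρ + h*(λ)))·(λE[H²]/2 + h*(λ)/λ + h¹) + (1 − h*(λ))/λ − h¹ + E[H], A_NPWO = λE[H²]/2 + ((1−ρ)²/(ρ h*(λ)) + 2)·E[H], and A_FCFS = λE[H²]/(2(1−ρ)) + E[H] + (1−ρ)E[H]/(ρ h*(λ)). Then A_NPW ≤ A_NPWO ≤ A_FCFS. -/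
/-!
With `X = λH`, multiplying each mean AoI by `λ` leaves a function of four dimensionless
moments: `ρ = E[X]`, `a = E[X²]/2`, `s = E[e^{-X}] = h*(λ)` and `t = E[X e^{-X}] = λh¹`.
The pointwise bounds `1 - x ≤ e^{-x} ≤ 1 - x + x²/2` and `1 - x²/2 ≤ (1 + x) e^{-x}`
for `x ≥ 0` give `1 - ρ ≤ s ≤ 1 - ρ + a` and `1 ≤ a + s + t`, and under these constraints
both differences of scaled ages factor into manifestly nonnegative rational functions.
-/

open MeasureTheory Real

namespace Real

theorem exp_neg_le_one_sub_add_sq_div_two {x : ℝ} (hx : 0 ≤ x) :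
    exp (-x) ≤ 1 - x + x ^ 2 / 2 := by
  have hderiv (y : ℝ) : HasDerivAt (fun y => exp (-y) - (1 - y + y ^ 2 / 2))
      (-exp (-y) - (-1 + y)) y := by
    refine ((hasDerivAt_neg' y).exp.sub
      (((hasDerivAt_id' y).const_sub 1).add ((hasDerivAt_pow 2 y).div_const 2))).congr_deriv ?_
    norm_num
  have hanti := antitone_of_hasDerivAt_nonpos hderiv fun y => by
    rw [Pi.zero_apply]
    linarith [one_sub_le_exp_neg y]
  simpa using hanti hx

theorem one_sub_sq_div_two_le_exp_neg_add_mul_exp_neg {x : ℝ} (hx : 0 ≤ x) :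
    1 - x ^ 2 / 2 ≤ exp (-x) + x * exp (-x) := by
  have hderiv (y : ℝ) : HasDerivAt (fun y => exp (-y) + y * exp (-y) + y ^ 2 / 2)
      (y * (1 - exp (-y))) y := by
    have hexp := (hasDerivAt_neg' y).exp
    refine ((hexp.add ((hasDerivAt_id' y).mul hexp)).add
      ((hasDerivAt_pow 2 y).div_const 2)).congr_deriv ?_
    norm_num
    ring
  have hderiv_nonneg (y : ℝ) : 0 ≤ y * (1 - exp (-y)) := by
    rcases le_total 0 y with hy | hy
    · exact mul_nonneg hy (sub_nonneg.mpr (exp_le_one_iff.mpr (neg_nonpos.mpr hy)))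
    · exact mul_nonneg_of_nonpos_of_nonpos hy
        (sub_nonpos.mpr (one_le_exp_iff.mpr (neg_nonneg.mpr hy)))
  have := monotone_of_hasDerivAt_nonneg hderiv hderiv_nonneg hx
  simp only [neg_zero, exp_zero, zero_mul, add_zero] at this
  linarith

end Real

section ExpNegMoments

variable {Ω : Type*} [MeasurableSpace Ω] {μ : Measure Ω} {X : Ω → ℝ}

theorem integrable_mul_exp_neg (hX : Integrable X μ) (hX0 : ∀ ω, 0 ≤ X ω) :
    Integrable (fun ω => X ω * exp (-X ω)) μ :=
  hX.mul_bdd (c := 1) (continuous_exp.comp_aestronglyMeasurable hX.aestronglyMeasurable.neg) <|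
    .of_forall fun ω => by simpa using hX0 ω

theorem integrable_exp_neg [IsFiniteMeasure μ] (hX : AEStronglyMeasurable X μ)
    (hX0 : ∀ ω, 0 ≤ X ω) : Integrable (fun ω => exp (-X ω)) μ :=
  (integrable_const 1).mono' (continuous_exp.comp_aestronglyMeasurable hX.neg) <|
    .of_forall fun ω => by simpa using hX0 ω

variable [IsProbabilityMeasure μ]

theorem one_sub_integral_le_integral_exp_neg (hX : Integrable X μ) (hX0 : ∀ ω, 0 ≤ X ω) :
    1 - ∫ ω, X ω ∂μ ≤ ∫ ω, exp (-X ω) ∂μ := by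
  have hlin : Integrable (fun ω => 1 - X ω) μ := (integrable_const 1).sub hX
  have := integral_mono hlin (integrable_exp_neg hX.aestronglyMeasurable hX0)
    fun ω => one_sub_le_exp_neg (X ω)
  rwa [integral_sub (integrable_const 1) hX, integral_const, probReal_univ, one_smul] at this

theorem integral_exp_neg_le (hX : Integrable X μ) (hX2 : Integrable (fun ω => X ω ^ 2) μ)
    (hX0 : ∀ ω, 0 ≤ X ω) :
    ∫ ω, exp (-X ω) ∂μ ≤ 1 - ∫ ω, X ω ∂μ + (∫ ω, X ω ^ 2 ∂μ) / 2 := by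
  have hlin : Integrable (fun ω => 1 - X ω) μ := (integrable_const 1).sub hX
  have hquad : Integrable (fun ω => 1 - X ω + X ω ^ 2 / 2) μ := hlin.add (hX2.div_const 2)
  have := integral_mono (integrable_exp_neg hX.aestronglyMeasurable hX0) hquad
    fun ω => exp_neg_le_one_sub_add_sq_div_two (hX0 ω)
  rwa [integral_add hlin (hX2.div_const 2), integral_sub (integrable_const 1) hX,
    integral_const, probReal_univ, one_smul, integral_div] at this

theorem one_sub_integral_sq_div_two_le (hX : Integrable X μ)
    (hX2 : Integrable (fun ω => X ω ^ 2) μ) (hX0 : ∀ ω, 0 ≤ X ω) :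
    1 - (∫ ω, X ω ^ 2 ∂μ) / 2 ≤ ∫ ω, exp (-X ω) ∂μ + ∫ ω, X ω * exp (-X ω) ∂μ := by
  have hquad : Integrable (fun ω => 1 - X ω ^ 2 / 2) μ :=
    (integrable_const 1).sub (hX2.div_const 2)
  have hexp := integrable_exp_neg hX.aestronglyMeasurable hX0
  have hmul := integrable_mul_exp_neg hX hX0
  have hsum : Integrable (fun ω => exp (-X ω) + X ω * exp (-X ω)) μ := hexp.add hmul
  have := integral_mono hquad hsum
    fun ω => one_sub_sq_div_two_le_exp_neg_add_mul_exp_neg (hX0 ω)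
  rwa [integral_add hexp hmul, integral_sub (integrable_const 1) (hX2.div_const 2),
    integral_const, probReal_univ, one_smul, integral_div] at this

end ExpNegMoments

-- `λ` times the mean AoI of each discipline, in terms of `a = λ²E[H²]/2`, `s = h*(λ)`,
-- `t = λh¹` and `ρ`.
noncomputable def scaledAgeNPW (a s t ρ : ℝ) : ℝ := (a + s + t) / (ρ + s) + 1 - s - t + ρ

noncomputable def scaledAgeNPWO (a s ρ : ℝ) : ℝ := a + (1 - ρ) ^ 2 / s + 2 * ρ

noncomputable def scaledAgeFCFS (a s ρ : ℝ) : ℝ := a / (1 - ρ) + ρ + (1 - ρ) / s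

theorem scaledAgeNPW_le_scaledAgeNPWO {a s t ρ : ℝ} (hρ : 0 ≤ ρ) (hρ1 : ρ < 1)
    (hs : 1 - ρ ≤ s) (hast : 1 ≤ a + s + t) :
    scaledAgeNPW a s t ρ ≤ scaledAgeNPWO a s ρ := by
  have hs0 : 0 < s := by linarith
  have hρs : 0 < ρ + s := by linarith
  have hfactor : scaledAgeNPWO a s ρ - scaledAgeNPW a s t ρ =
      (ρ + s - 1) * (ρ * (ρ + s - 1) + s * (a + s + t - 1)) / (s * (ρ + s)) := by
    unfold scaledAgeNPW scaledAgeNPWO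
    field_simp
    ring
  have hρs1 : 0 ≤ ρ + s - 1 := by linarith
  have hast1 : 0 ≤ a + s + t - 1 := by linarith
  rw [← sub_nonneg, hfactor]
  positivity

theorem scaledAgeNPWO_le_scaledAgeFCFS {a s ρ : ℝ} (hρ : 0 ≤ ρ) (hρ1 : ρ < 1)
    (hs : 1 - ρ ≤ s) (has : s ≤ 1 - ρ + a) :
    scaledAgeNPWO a s ρ ≤ scaledAgeFCFS a s ρ := by
  have hs0 : 0 < s := by linarith
  have h1ρ : 0 < 1 - ρ := by linarith
  have hfactor : scaledAgeFCFS a s ρ - scaledAgeNPWO a s ρ =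
      ρ * (a * (s - (1 - ρ)) + (1 - ρ) * (1 - ρ + a - s)) / ((1 - ρ) * s) := by
    unfold scaledAgeNPWO scaledAgeFCFS
    field_simp
    ring
  have ha : 0 ≤ a := by linarith
  have hs1 : 0 ≤ s - (1 - ρ) := by linarith
  have has1 : 0 ≤ 1 - ρ + a - s := by linarith
  rw [← sub_nonneg, hfactor]
  positivity

theorem stmt_16_general {Ω : Type*} [MeasurableSpace Ω] (μ : Measure Ω) [IsProbabilityMeasure μ]
    (H : Ω → ℝ) (hHpos : ∀ ω, 0 ≤ H ω)
    (hHint : Integrable H μ) (hH2int : Integrable (fun ω => H ω ^ 2) μ)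
    (EH EH2 : ℝ) (hEH : EH = ∫ ω, H ω ∂μ) (hEH2 : EH2 = ∫ ω, H ω ^ 2 ∂μ)
    (hEHpos : 0 < EH)
    (lam : ℝ) (hlam : 0 < lam)
    (ρ : ℝ) (hρdef : ρ = lam * EH) (hρ : ρ < 1)
    (hstarlam : ℝ) (hhstarlam : hstarlam = ∫ ω, Real.exp (-(lam * H ω)) ∂μ)
    (h1 : ℝ) (hh1 : h1 = ∫ ω, H ω * Real.exp (-(lam * H ω)) ∂μ)
    (ANPW ANPWO AFCFS : ℝ)
    (hANPW : ANPW = (1 / (ρ + hstarlam)) * (lam * EH2 / 2 + hstarlam / lam + h1) +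
      (1 - hstarlam) / lam - h1 + EH)
    (hANPWO : ANPWO = lam * EH2 / 2 + ((1 - ρ) ^ 2 / (ρ * hstarlam) + 2) * EH)
    (hAFCFS : AFCFS = lam * EH2 / (2 * (1 - ρ)) + EH + (1 - ρ) * EH / (ρ * hstarlam)) :
    ANPW ≤ ANPWO ∧ ANPWO ≤ AFCFS := by
  have hρpos : 0 < ρ := hρdef ▸ mul_pos hlam hEHpos
  have hX0 (ω : Ω) : 0 ≤ lam * H ω := mul_nonneg hlam.le (hHpos ω)
  have hX : Integrable (fun ω => lam * H ω) μ := hHint.const_mul lam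
  have hX2 : Integrable (fun ω => (lam * H ω) ^ 2) μ := by
    simpa only [mul_pow] using hH2int.const_mul (lam ^ 2)
  have hs_ge := one_sub_integral_le_integral_exp_neg hX hX0
  have hs_le := integral_exp_neg_le hX hX2 hX0
  have hast := one_sub_integral_sq_div_two_le hX hX2 hX0
  simp only [mul_pow, mul_assoc, integral_const_mul, ← hEH, ← hEH2, ← hh1, ← hhstarlam,
    ← hρdef] at hs_ge hs_le hast
  have hNPW : lam * ANPW = scaledAgeNPW (lam ^ 2 * EH2 / 2) hstarlam (lam * h1) ρ := by
    rw [hANPW, scaledAgeNPW, hρdef]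
    field_simp
    ring
  have hNPWO : lam * ANPWO = scaledAgeNPWO (lam ^ 2 * EH2 / 2) hstarlam ρ := by
    rw [hANPWO, scaledAgeNPWO, hρdef]
    field_simp
    ring
  have hFCFS : lam * AFCFS = scaledAgeFCFS (lam ^ 2 * EH2 / 2) hstarlam ρ := by
    rw [hAFCFS, scaledAgeFCFS, hρdef]
    field_simp
  refine ⟨le_of_mul_le_mul_left ?_ hlam, le_of_mul_le_mul_left ?_ hlam⟩
  · rw [hNPW, hNPWO]
    exact scaledAgeNPW_le_scaledAgeNPWO hρpos.le hρ hs_ge (by linarith)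
  · rw [hNPWO, hFCFS]
    exact scaledAgeNPWO_le_scaledAgeFCFS hρpos.le hρ hs_ge (by linarith)

/-- Mean-AoI ordering in the stationary M/GI/1 queue with arrival rate `λ`, service
time `H`, and `ρ = λE[H] < 1`: the mean AoI under non-preemptive LCFS with
discarding, non-preemptive LCFS without discarding, and FCFS satisfy
`A_NPW ≤ A_NPWO ≤ A_FCFS`. -/
theorem stmt_16 {Ω : Type*} [MeasurableSpace Ω] (μ : Measure Ω) [IsProbabilityMeasure μ]
    (H : Ω → ℝ) (hH : Measurable H) (hHpos : ∀ ω, 0 ≤ H ω)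
    (hHint : Integrable H μ) (hH2int : Integrable (fun ω => H ω ^ 2) μ)
    (EH EH2 : ℝ) (hEH : EH = ∫ ω, H ω ∂μ) (hEH2 : EH2 = ∫ ω, H ω ^ 2 ∂μ)
    (hEHpos : 0 < EH)
    (lam : ℝ) (hlam : 0 < lam)
    (ρ : ℝ) (hρdef : ρ = lam * EH) (hρ : ρ < 1)
    (hstarlam : ℝ) (hhstarlam : hstarlam = ∫ ω, Real.exp (-(lam * H ω)) ∂μ)
    (h1 : ℝ) (hh1 : h1 = ∫ ω, H ω * Real.exp (-(lam * H ω)) ∂μ)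
    (ANPW ANPWO AFCFS : ℝ)
    (hANPW : ANPW = (1 / (ρ + hstarlam)) * (lam * EH2 / 2 + hstarlam / lam + h1) +
      (1 - hstarlam) / lam - h1 + EH)
    (hANPWO : ANPWO = lam * EH2 / 2 + ((1 - ρ) ^ 2 / (ρ * hstarlam) + 2) * EH)
    (hAFCFS : AFCFS = lam * EH2 / (2 * (1 - ρ)) + EH + (1 - ρ) * EH / (ρ * hstarlam)) :
    ANPW ≤ ANPWO ∧ ANPWO ≤ AFCFS :=
  stmt_16_general μ H hHpos hHint hH2int EH EH2 hEH hEH2 hEHpos lam hlam ρ hρdef hρ hstarlam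
    hhstarlam h1 hh1 ANPW ANPWO AFCFS hANPW hANPWO hAFCFS
end

section
/- Let G be a nonnegative random variable with 0 < E[G] < ∞, let μ > 0, and let γ ∈ (0,1) satisfy γ = E[e^{−(μ−μγ)G}]. Then: (a) γ ≥ E[e^{−μG}] / (1 − μ E[G e^{−μG}]); and (b) E[G e^{−(μ−μγ)G}] ≥ E[G e^{−μG}] + γ μ E[G² e^{−μG}]. -/
/-!
Since `1 + x ≤ eˣ`, pointwise `e^{-(μ-μγ)G} = e^{-μG} e^{μγG} ≥ e^{-μG} (1 + μγG)`. Integrating this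
(once as it stands, once multiplied by `G`) and using the fixed-point equation gives
`E[e^{-μG}] + γμ E[G e^{-μG}] ≤ γ` and (b). As `E[e^{-μG}] > 0` and `γ < 1`, the first inequality forces
`μ E[G e^{-μG}] < 1`, and rearranging it gives (a).
-/

open MeasureTheory

open scoped Nat in
lemma pow_mul_exp_neg_mul_le {x a : ℝ} (hx : 0 ≤ x) (ha : 0 < a) (n : ℕ) :
    x ^ n * Real.exp (-(a * x)) ≤ n ! / a ^ n := by
  have hexp : (a * x) ^ n / n ! ≤ Real.exp (a * x) :=
    Real.pow_div_factorial_le_exp _ (mul_nonneg ha.le hx) n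
  rw [div_le_iff₀ (by positivity), mul_pow] at hexp
  rw [le_div_iff₀ (by positivity), Real.exp_neg]
  calc x ^ n * (Real.exp (a * x))⁻¹ * a ^ n
      = a ^ n * x ^ n * (Real.exp (a * x))⁻¹ := by ring
    _ ≤ Real.exp (a * x) * n ! * (Real.exp (a * x))⁻¹ := by gcongr
    _ = n ! := by field_simp

lemma exp_neg_mul_mul_one_add_le (a b x : ℝ) :
    Real.exp (-(a * x)) * (1 + b * x) ≤ Real.exp (-((a - b) * x)) := by
  have hsplit : Real.exp (-((a - b) * x)) = Real.exp (-(a * x)) * Real.exp (b * x) := by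
    rw [← Real.exp_add]
    ring_nf
  rw [hsplit, add_comm 1]
  exact mul_le_mul_of_nonneg_left (Real.add_one_le_exp _) (Real.exp_pos _).le

section Moments

variable {Ω : Type*} [MeasurableSpace Ω] {P : Measure Ω} {G : Ω → ℝ}

lemma integrable_pow_mul_exp_neg_mul [IsFiniteMeasure P] (hG : Measurable G)
    (hGpos : ∀ ω, 0 ≤ G ω) {a : ℝ} (ha : 0 < a) (n : ℕ) :
    Integrable (fun ω => G ω ^ n * Real.exp (-(a * G ω))) P := by
  refine .of_bound ((hG.pow_const n).mul (hG.const_mul a).neg.exp).aestronglyMeasurable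
    (n.factorial / a ^ n) (.of_forall fun ω => ?_)
  rw [Real.norm_of_nonneg (by have := hGpos ω; positivity)]
  exact pow_mul_exp_neg_mul_le (hGpos ω) ha n

lemma integral_pow_mul_exp_neg_add_le [IsFiniteMeasure P] (hG : Measurable G)
    (hGpos : ∀ ω, 0 ≤ G ω) {a b : ℝ} (ha : 0 < a) (hab : b < a) (n : ℕ) :
    ∫ ω, G ω ^ n * Real.exp (-(a * G ω)) ∂P + b * ∫ ω, G ω ^ (n + 1) * Real.exp (-(a * G ω)) ∂P
      ≤ ∫ ω, G ω ^ n * Real.exp (-((a - b) * G ω)) ∂P := by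
  have hn := integrable_pow_mul_exp_neg_mul (P := P) hG hGpos ha n
  have hsucc := integrable_pow_mul_exp_neg_mul (P := P) hG hGpos ha (n + 1)
  rw [← integral_const_mul, ← integral_add hn (hsucc.const_mul b)]
  refine integral_mono (hn.add (hsucc.const_mul b))
    (integrable_pow_mul_exp_neg_mul hG hGpos (sub_pos.2 hab) n) fun ω => ?_
  calc G ω ^ n * Real.exp (-(a * G ω)) + b * (G ω ^ (n + 1) * Real.exp (-(a * G ω)))
      = G ω ^ n * (Real.exp (-(a * G ω)) * (1 + b * G ω)) := by ring
    _ ≤ G ω ^ n * Real.exp (-((a - b) * G ω)) :=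
      mul_le_mul_of_nonneg_left (exp_neg_mul_mul_one_add_le a b (G ω)) (pow_nonneg (hGpos ω) n)

end Moments

theorem stmt_18_general {Ω : Type*} [MeasurableSpace Ω] (P : Measure Ω) [IsProbabilityMeasure P]
    (G : Ω → ℝ) (hG : Measurable G) (hGpos : ∀ ω, 0 ≤ G ω)
    (mu : ℝ) (hmu : 0 < mu)
    (γ : ℝ) (hγ : γ ∈ Set.Ioo (0 : ℝ) 1)
    (hγfix : γ = ∫ ω, Real.exp (-((mu - mu * γ) * G ω)) ∂P) :
    γ ≥ (∫ ω, Real.exp (-(mu * G ω)) ∂P) /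
        (1 - mu * ∫ ω, G ω * Real.exp (-(mu * G ω)) ∂P) ∧
      (∫ ω, G ω * Real.exp (-((mu - mu * γ) * G ω)) ∂P) ≥
        (∫ ω, G ω * Real.exp (-(mu * G ω)) ∂P) +
          γ * mu * ∫ ω, G ω ^ 2 * Real.exp (-(mu * G ω)) ∂P := by
  obtain ⟨hγ0, hγ1⟩ := hγ
  have hlt : mu * γ < mu := mul_lt_of_lt_one_right hmu hγ1
  have hzeroth := integral_pow_mul_exp_neg_add_le (P := P) hG hGpos hmu hlt 0
  have hfirst := integral_pow_mul_exp_neg_add_le (P := P) hG hGpos hmu hlt 1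
  simp only [pow_zero, one_mul, zero_add, pow_one, Nat.reduceAdd, ← hγfix] at hzeroth hfirst
  have hA : 0 < ∫ ω, Real.exp (-(mu * G ω)) ∂P :=
    integral_exp_pos (by simpa using integrable_pow_mul_exp_neg_mul (P := P) hG hGpos hmu 0)
  refine ⟨?_, by linarith⟩
  have hD : 0 < 1 - mu * ∫ ω, G ω * Real.exp (-(mu * G ω)) ∂P := by nlinarith
  rw [ge_iff_le, div_le_iff₀ hD]
  linarith

/-- Key estimates for the GI/M/1 fixed point `γ = E[e^{-(μ-μγ)G}]`, `γ ∈ (0,1)`: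
(a) `γ ≥ E[e^{-μG}]/(1 - μE[G e^{-μG}])`, and
(b) `E[G e^{-(μ-μγ)G}] ≥ E[G e^{-μG}] + γμE[G² e^{-μG}]`. -/
theorem stmt_18 {Ω : Type*} [MeasurableSpace Ω] (P : Measure Ω) [IsProbabilityMeasure P]
    (G : Ω → ℝ) (hG : Measurable G) (hGpos : ∀ ω, 0 ≤ G ω)
    (hGint : Integrable G P)
    (hEGpos : 0 < ∫ ω, G ω ∂P)
    (mu : ℝ) (hmu : 0 < mu)
    (γ : ℝ) (hγ : γ ∈ Set.Ioo (0 : ℝ) 1)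
    (hγfix : γ = ∫ ω, Real.exp (-((mu - mu * γ) * G ω)) ∂P) :
    γ ≥ (∫ ω, Real.exp (-(mu * G ω)) ∂P) /
        (1 - mu * ∫ ω, G ω * Real.exp (-(mu * G ω)) ∂P) ∧
      (∫ ω, G ω * Real.exp (-((mu - mu * γ) * G ω)) ∂P) ≥
        (∫ ω, G ω * Real.exp (-(mu * G ω)) ∂P) +
          γ * mu * ∫ ω, G ω ^ 2 * Real.exp (-(mu * G ω)) ∂P :=
  stmt_18_general P G hG hGpos mu hmu γ hγ hγfix
end
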